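/- arXiv:2412.18698 — 4 statements merged into one kernel-verified Lean document; each statement's English description precedes it below -/
import Mathlib

section
/- Let ω be a weight function satisfying ω(t) = o(t) as t → ∞, and let g : [0,∞) → [0,∞) satisfy ω(t) = o(g(t)). Then there exists a weight function σ with σ(t) = o(t), ω(t) = o(σ(t)), and σ(t) = o(g(t)). -/
/-- `w₁ = o(w₂)` at infinity (for nonnegative functions): for every `ε > 0`,
`w₁(t) ≤ ε·w₂(t)` for all large `t`. -/
def LittleO (w₁ w₂ : ℝ → ℝ) : Prop := ∀ ε > 0, ∃ t₀ : ℝ, ∀ t ≥ t₀, w₁ t ≤ ε * w₂ t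

/-- `w₁ = O(w₂)` at infinity (for nonnegative functions). -/
def BigO (w₁ w₂ : ℝ → ℝ) : Prop := ∃ C > 0, ∃ t₀ : ℝ, ∀ t ≥ t₀, w₁ t ≤ C * w₂ t

/-- A weight function in the sense of Braun–Meise–Taylor: a continuous increasing
`ω : [0,∞) → [0,∞)` vanishing on `[0,1]` with `(α) ω(2t) = O(ω(t))`, `(β) ω(t) = O(t)`,
`(γ) log t = o(ω(t))` and `(δ) t ↦ ω(eᵗ)` convex. -/
structure IsWeightFunction (ω : ℝ → ℝ) : Prop where
  nonneg : ∀ t, 0 ≤ ω t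
  continuous : ContinuousOn ω (Set.Ici 0)
  mono : MonotoneOn ω (Set.Ici 0)
  eq_zero : ∀ t ∈ Set.Icc (0 : ℝ) 1, ω t = 0
  alpha : BigO (fun t => ω (2 * t)) ω
  beta : BigO ω id
  gamma : LittleO Real.log ω
  delta : ConvexOn ℝ (Set.Ici 0) (fun t => ω (Real.exp t))

/-!
Take `σ = φ ∘ ω` with `φ s = ∑ₖ (s - bₖ)⁺`, a convex increasing piecewise linear function whose
slope jumps by one at each breakpoint `bₖ`. Composition with a convex increasing function keeps
`t ↦ σ(eᵗ)` convex, and since the slopes of `φ` tend to infinity, `ω = o(σ)`. The breakpoints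
satisfy `bₖ₊₁ ≥ C bₖ`, where `ω(2t) ≤ C ω(t)`, so that `φ(Cs) ≤ Cs + C φ(s)` gives (α); and
`bₖ ≥ ω(Rₖ)`, where `(k+1)² ω(t) ≤ min(t, g(t))` for `t ≥ Rₖ`. When `bₙ₋₁ < ω(t) ≤ bₙ` this yields
`σ(t) ≤ n ω(t) ≤ min(t, g(t)) / n`.
-/

open Filter Topology Finset

lemma littleO_iff_eventually {f g : ℝ → ℝ} :
    LittleO f g ↔ ∀ ε > 0, ∀ᶠ t in atTop, f t ≤ ε * g t := by
  simp only [LittleO, eventually_atTop]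

lemma LittleO.eventually_mul_le {f g : ℝ → ℝ} (h : LittleO f g) {c : ℝ} (hc : 0 < c) :
    ∀ᶠ t in atTop, c * f t ≤ g t := by
  filter_upwards [littleO_iff_eventually.1 h c⁻¹ (inv_pos.2 hc)] with t ht
  calc c * f t ≤ c * (c⁻¹ * g t) := by gcongr
    _ = g t := by field_simp

lemma LittleO.eventually_le {f g : ℝ → ℝ} (h : LittleO f g) : ∀ᶠ t in atTop, f t ≤ g t := by
  simpa using h.eventually_mul_le one_pos

lemma LittleO.bigO {f g : ℝ → ℝ} (h : LittleO f g) : BigO f g :=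
  ⟨1, one_pos, h 1 one_pos⟩

lemma LittleO.trans_eventually_le {f g h : ℝ → ℝ} (hfg : LittleO f g)
    (hgh : ∀ᶠ t in atTop, g t ≤ h t) : LittleO f h := by
  rw [littleO_iff_eventually] at hfg ⊢
  intro ε hε
  filter_upwards [hfg ε hε, hgh] with t hf hg
  exact hf.trans (mul_le_mul_of_nonneg_left hg hε.le)

lemma LittleO.comp_tendsto {u v f : ℝ → ℝ} (huv : LittleO u v) (hf : Tendsto f atTop atTop) :
    LittleO (u ∘ f) (v ∘ f) := by
  rw [littleO_iff_eventually] at huv ⊢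
  exact fun ε hε => hf.eventually (huv ε hε)

lemma IsWeightFunction.tendsto_atTop {ω : ℝ → ℝ} (hω : IsWeightFunction ω) :
    Tendsto ω atTop atTop :=
  tendsto_atTop_mono' atTop hω.gamma.eventually_le Real.tendsto_log_atTop

noncomputable def growthSeq (c : ℝ) (r : ℕ → ℝ) : ℕ → ℝ
  | 0 => max (r 0) 0
  | k + 1 => max (max (growthSeq c r k) (c * growthSeq c r k)) (max (r (k + 1)) (k + 1))

lemma exists_monotone_dominating_seq (c : ℝ) (r : ℕ → ℝ) :
    ∃ b : ℕ → ℝ, Monotone b ∧ (∀ k : ℕ, (k : ℝ) ≤ b k) ∧ (∀ k, r k ≤ b k) ∧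
      ∀ k, c * b k ≤ b (k + 1) := by
  refine ⟨growthSeq c r, monotone_nat_of_le_succ fun k => ?_, fun k => ?_, fun k => ?_,
    fun k => ?_⟩
  · exact (le_max_left _ _).trans (le_max_left _ _)
  · cases k with
    | zero => simp [growthSeq]
    | succ k =>
      push_cast
      exact (le_max_right _ _).trans (le_max_right _ _)
  · cases k with
    | zero => exact le_max_left _ _
    | succ k => exact (le_max_left _ _).trans (le_max_right _ _)
  · exact (le_max_right _ _).trans (le_max_left _ _)

noncomputable def hingeSum (b : ℕ → ℝ) (s : ℝ) : ℝ := ∑' k, (s - b k)⁺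

section hingeSum

variable {b : ℕ → ℝ}

lemma nonneg_of_forall_natCast_le (hbk : ∀ k : ℕ, (k : ℝ) ≤ b k) (k : ℕ) : 0 ≤ b k :=
  (Nat.cast_nonneg k).trans (hbk k)

lemma exists_lt_seq (hbk : ∀ k : ℕ, (k : ℝ) ≤ b k) (s : ℝ) : ∃ n, s < b n :=
  ⟨⌈s⌉₊ + 1, by linarith [Nat.le_ceil s, hbk (⌈s⌉₊ + 1), (by push_cast; ring :
    ((⌈s⌉₊ + 1 : ℕ) : ℝ) = ⌈s⌉₊ + 1)]⟩

lemma summable_posPart_sub (hbk : ∀ k : ℕ, (k : ℝ) ≤ b k) (s : ℝ) :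
    Summable fun k => (s - b k)⁺ := by
  refine summable_of_ne_finset_zero (s := range ⌈s⌉₊) fun k hk => posPart_eq_zero.2 ?_
  have : (⌈s⌉₊ : ℝ) ≤ k := by exact_mod_cast not_lt.1 (mt mem_range.2 hk)
  linarith [Nat.le_ceil s, hbk k]

lemma hingeSum_eq_sum (hb : Monotone b) {s : ℝ} {n : ℕ} (hs : s ≤ b n) :
    hingeSum b s = ∑ k ∈ range n, (s - b k)⁺ :=
  tsum_eq_sum fun _ hk => posPart_eq_zero.2 <|
    sub_nonpos.2 <| hs.trans <| hb <| not_lt.1 <| mt mem_range.2 hk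

lemma hingeSum_nonneg (s : ℝ) : 0 ≤ hingeSum b s :=
  tsum_nonneg fun _ => posPart_nonneg _

lemma hingeSum_eq_zero (hb : Monotone b) {s : ℝ} (hs : s ≤ b 0) : hingeSum b s = 0 := by
  simpa using hingeSum_eq_sum hb hs

lemma hingeSum_monotone (hbk : ∀ k : ℕ, (k : ℝ) ≤ b k) : Monotone (hingeSum b) := fun x y hxy =>
  (summable_posPart_sub hbk x).tsum_le_tsum (fun _ => posPart_mono (sub_le_sub_right hxy _))
    (summable_posPart_sub hbk y)

lemma continuous_hingeSum (hb : Monotone b) (hbk : ∀ k : ℕ, (k : ℝ) ≤ b k) :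
    Continuous (hingeSum b) := by
  refine continuous_iff_continuousAt.2 fun s => ?_
  obtain ⟨n, hn⟩ := exists_lt_seq hbk s
  have hloc : (fun x => ∑ k ∈ range n, (x - b k)⁺) =ᶠ[𝓝 s] hingeSum b :=
    eventually_of_mem (Iio_mem_nhds hn) fun x hx => (hingeSum_eq_sum hb (le_of_lt hx)).symm
  exact ContinuousAt.congr (by fun_prop) hloc

lemma convexOn_hingeSum (hbk : ∀ k : ℕ, (k : ℝ) ≤ b k) : ConvexOn ℝ Set.univ (hingeSum b) := by
  refine ⟨convex_univ, fun x _ y _ a c ha hc hac => ?_⟩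
  have hterm : ∀ k, (a • x + c • y - b k)⁺ ≤ a * (x - b k)⁺ + c * (y - b k)⁺ := fun k => by
    have hx := mul_le_mul_of_nonneg_left (le_posPart (x - b k)) ha
    have hy := mul_le_mul_of_nonneg_left (le_posPart (y - b k)) hc
    have hx0 := mul_nonneg ha (posPart_nonneg (x - b k))
    have hy0 := mul_nonneg hc (posPart_nonneg (y - b k))
    have hsplit : a * b k + c * b k = b k := by rw [← add_mul, hac, one_mul]
    refine max_le ?_ (by positivity)
    simp only [smul_eq_mul]
    linarith
  have hx := (summable_posPart_sub hbk x).mul_left a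
  have hy := (summable_posPart_sub hbk y).mul_left c
  calc hingeSum b (a • x + c • y) ≤ ∑' k, (a * (x - b k)⁺ + c * (y - b k)⁺) :=
        (summable_posPart_sub hbk _).tsum_le_tsum hterm (hx.add hy)
    _ = a • hingeSum b x + c • hingeSum b y := by
        rw [hx.tsum_add hy, tsum_mul_left, tsum_mul_left]; rfl

lemma hingeSum_le_mul (hb : Monotone b) (hbk : ∀ k : ℕ, (k : ℝ) ≤ b k) {s : ℝ} {n : ℕ}
    (hs0 : 0 ≤ s) (hs : s ≤ b n) : hingeSum b s ≤ n * s := by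
  rw [hingeSum_eq_sum hb hs]
  calc ∑ k ∈ range n, (s - b k)⁺ ≤ ∑ _k ∈ range n, s :=
        sum_le_sum fun k _ => max_le (by linarith [nonneg_of_forall_natCast_le hbk k]) hs0
    _ = n * s := by simp

lemma exists_hingeSum_le_mul (hb : Monotone b) (hbk : ∀ k : ℕ, (k : ℝ) ≤ b k) {s : ℝ}
    (hs : 0 ≤ s) : ∃ n : ℕ, hingeSum b s ≤ n * s ∧ ∀ k < n, b k < s := by
  classical
  have hex : ∃ n, s ≤ b n := (exists_lt_seq hbk s).imp fun _ => le_of_lt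
  exact ⟨Nat.find hex, hingeSum_le_mul hb hbk hs (Nat.find_spec hex),
    fun k hk => not_le.1 (Nat.find_min hex hk)⟩

lemma mul_sub_le_hingeSum (hb : Monotone b) (hbk : ∀ k : ℕ, (k : ℝ) ≤ b k) (m : ℕ) (s : ℝ) :
    ((m : ℝ) + 1) * (s - b m) ≤ hingeSum b s :=
  calc ((m : ℝ) + 1) * (s - b m) = ∑ _k ∈ range (m + 1), (s - b m) := by
        rw [sum_const, card_range, nsmul_eq_mul]; push_cast; ring
    _ ≤ ∑ k ∈ range (m + 1), (s - b k)⁺ := sum_le_sum fun k hk =>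
        (sub_le_sub_left (hb (Nat.lt_succ_iff.1 (mem_range.1 hk))) s).trans (le_posPart _)
    _ ≤ hingeSum b s :=
        (summable_posPart_sub hbk s).sum_le_tsum _ fun _ _ => posPart_nonneg _

lemma hingeSum_mul_le (hbk : ∀ k : ℕ, (k : ℝ) ≤ b k) {C : ℝ} (hC : 0 ≤ C)
    (hgap : ∀ k, C * b k ≤ b (k + 1)) (s : ℝ) :
    hingeSum b (C * s) ≤ (C * s - b 0)⁺ + C * hingeSum b s := by
  have hsum := summable_posPart_sub hbk (C * s)
  rw [hingeSum, hsum.tsum_eq_zero_add, hingeSum, ← tsum_mul_left]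
  refine add_le_add le_rfl <| ((summable_nat_add_iff 1).2 hsum).tsum_le_tsum (fun k => ?_)
    ((summable_posPart_sub hbk s).mul_left C)
  calc (C * s - b (k + 1))⁺ ≤ (C * (s - b k))⁺ := posPart_mono (by linarith [hgap k])
    _ = C * (s - b k)⁺ := by
        rw [posPart_def, posPart_def, mul_max_of_nonneg _ _ hC, mul_zero]

lemma littleO_id_hingeSum (hb : Monotone b) (hbk : ∀ k : ℕ, (k : ℝ) ≤ b k) :
    LittleO id (hingeSum b) := by
  rw [littleO_iff_eventually]
  intro ε hε
  obtain ⟨m, hm⟩ := exists_nat_ge (2 / ε)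
  have hεm : 2 ≤ ε * m := by rwa [div_le_iff₀ hε, mul_comm] at hm
  filter_upwards [eventually_ge_atTop (2 * b m)] with s hs
  have hlow := mul_le_mul_of_nonneg_left (mul_sub_le_hingeSum hb hbk m s) hε.le
  have hbm := nonneg_of_forall_natCast_le hbk m
  have hm0 : (0 : ℝ) ≤ m := Nat.cast_nonneg m
  simp only [id]
  nlinarith [mul_le_mul_of_nonneg_right hεm (by linarith : 0 ≤ s - b m)]

lemma littleO_hingeSum_comp (hb : Monotone b) (hbk : ∀ k : ℕ, (k : ℝ) ≤ b k) {f w : ℝ → ℝ}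
    (hf0 : ∀ t, 0 ≤ f t) (hfw : LittleO f w)
    (hthr : ∀ k, ∀ t ≥ 0, b k < f t → ((k : ℝ) + 1) ^ 2 * f t ≤ w t) :
    LittleO (hingeSum b ∘ f) w := by
  rw [littleO_iff_eventually] at hfw ⊢
  intro ε hε
  obtain ⟨N, hN⟩ := exists_nat_ge (1 / ε)
  have hN0 : (0 : ℝ) < N := (one_div_pos.2 hε).trans_le hN
  have hεN : 1 ≤ ε * N := by rwa [div_le_iff₀ hε, mul_comm] at hN
  filter_upwards [hfw (ε / N) (by positivity), eventually_ge_atTop 0] with t hfwt ht0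
  obtain ⟨n, hσ, hbn⟩ := exists_hingeSum_le_mul hb hbk (hf0 t)
  rcases le_or_gt n N with hnN | hNn
  · calc hingeSum b (f t) ≤ N * f t :=
          hσ.trans (mul_le_mul_of_nonneg_right (by exact_mod_cast hnN) (hf0 t))
      _ ≤ N * (ε / N * w t) := mul_le_mul_of_nonneg_left hfwt hN0.le
      _ = ε * w t := by field_simp
  · obtain ⟨j, rfl⟩ := Nat.exists_eq_add_one_of_ne_zero (by omega : n ≠ 0)
    have hw := hthr j t ht0 (hbn j (Nat.lt_succ_self j))
    have hjN : (N : ℝ) ≤ j := by exact_mod_cast Nat.lt_succ_iff.1 hNn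
    have hεj : 1 ≤ ε * (j + 1) := by nlinarith
    push_cast at hσ
    calc hingeSum b (f t) ≤ (j + 1) * f t := hσ
      _ ≤ ε * (j + 1) * ((j + 1) * f t) := by
          nlinarith [mul_nonneg (by positivity : (0 : ℝ) ≤ j + 1) (hf0 t)]
      _ = ε * ((j + 1) ^ 2 * f t) := by ring
      _ ≤ ε * w t := mul_le_mul_of_nonneg_left hw hε.le

end hingeSum

theorem IsWeightFunction.hingeSum_comp {ω : ℝ → ℝ} (hω : IsWeightFunction ω) {b : ℕ → ℝ}
    (hb : Monotone b) (hbk : ∀ k : ℕ, (k : ℝ) ≤ b k) {C : ℝ} (hC : 0 < C)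
    (hgap : ∀ k, C * b k ≤ b (k + 1)) (hα : ∃ t₀, ∀ t ≥ t₀, ω (2 * t) ≤ C * ω t)
    (hβ : BigO (hingeSum b ∘ ω) id) : IsWeightFunction (hingeSum b ∘ ω) := by
  have hωσ : LittleO ω (hingeSum b ∘ ω) :=
    (littleO_id_hingeSum hb hbk).comp_tendsto hω.tendsto_atTop
  refine ⟨fun t => hingeSum_nonneg _, (continuous_hingeSum hb hbk).comp_continuousOn hω.continuous,
    (hingeSum_monotone hbk).comp_monotoneOn hω.mono, fun t ht => ?_, ?_, hβ,
    hω.gamma.trans_eventually_le hωσ.eventually_le, ?_⟩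
  · simp only [Function.comp, hω.eq_zero t ht]
    exact hingeSum_eq_zero hb (nonneg_of_forall_natCast_le hbk 0)
  · refine ⟨2 * C, by positivity, eventually_atTop.1 ?_⟩
    filter_upwards [eventually_atTop.2 hα, hωσ.eventually_le] with t h2t hσt
    have hωt := hω.nonneg t
    have hhead : (C * ω t - b 0)⁺ ≤ C * ω t :=
      max_le (by linarith [nonneg_of_forall_natCast_le hbk 0]) (by positivity)
    calc hingeSum b (ω (2 * t)) ≤ hingeSum b (C * ω t) := hingeSum_monotone hbk h2t
      _ ≤ C * ω t + C * hingeSum b (ω t) :=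
          (hingeSum_mul_le hbk hC.le hgap _).trans (by gcongr)
      _ ≤ 2 * C * (hingeSum b ∘ ω) t := by
          simp only [Function.comp] at hσt ⊢
          nlinarith
  · refine ⟨convex_Ici 0, fun x hx y hy a c ha hc hac => ?_⟩
    exact (hingeSum_monotone hbk (hω.delta.2 hx hy ha hc hac)).trans
      ((convexOn_hingeSum hbk).2 trivial trivial ha hc hac)

theorem stmt7_general (ω g : ℝ → ℝ) (hω : IsWeightFunction ω) (hβ₀ : LittleO ω id)
    (hog : LittleO ω g) :
    ∃ σ : ℝ → ℝ, IsWeightFunction σ ∧ LittleO σ id ∧ LittleO ω σ ∧ LittleO σ g := by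
  obtain ⟨C, hC, hα⟩ := hω.alpha
  have hthr : ∀ k : ℕ, ∃ R ≥ 0, ∀ t ≥ R,
      ((k : ℝ) + 1) ^ 2 * ω t ≤ id t ∧ ((k : ℝ) + 1) ^ 2 * ω t ≤ g t := fun k => by
    obtain ⟨R, hR⟩ := eventually_atTop.1 <|
      (hβ₀.eventually_mul_le (by positivity : (0 : ℝ) < ((k : ℝ) + 1) ^ 2)).and
        (hog.eventually_mul_le (by positivity : (0 : ℝ) < ((k : ℝ) + 1) ^ 2))
    exact ⟨max R 0, le_max_right _ _, fun t ht => hR t (le_of_max_le_left ht)⟩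
  choose R hR0 hR using hthr
  obtain ⟨b, hb, hbk, hbR, hgap⟩ := exists_monotone_dominating_seq C fun k => ω (R k)
  have hR_le : ∀ k, ∀ t ≥ 0, b k < ω t → R k ≤ t := fun k t ht hbt =>
    (hω.mono.reflect_lt (hR0 k) ht ((hbR k).trans_lt hbt)).le
  have hσid : LittleO (hingeSum b ∘ ω) id := littleO_hingeSum_comp hb hbk hω.nonneg hβ₀
    fun k t ht hbt => (hR k t (hR_le k t ht hbt)).1
  exact ⟨_, hω.hingeSum_comp hb hbk hC hgap hα hσid.bigO, hσid,
    (littleO_id_hingeSum hb hbk).comp_tendsto hω.tendsto_atTop,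
    littleO_hingeSum_comp hb hbk hω.nonneg hog fun k t ht hbt => (hR k t (hR_le k t ht hbt)).2⟩

/-- Let `ω` be a weight function with `ω(t) = o(t)` and `g : [0,∞) → [0,∞)` with
`ω(t) = o(g(t))`.  Then there is a weight function `σ` with `σ(t) = o(t)`,
`ω(t) = o(σ(t))` and `σ(t) = o(g(t))`. -/
theorem stmt7 (ω g : ℝ → ℝ) (hω : IsWeightFunction ω) (hβ₀ : LittleO ω id)
    (hg : ∀ t, 0 ≤ g t) (hog : LittleO ω g) :
    ∃ σ : ℝ → ℝ, IsWeightFunction σ ∧ LittleO σ id ∧ LittleO ω σ ∧ LittleO σ g :=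
  stmt7_general ω g hω hβ₀ hog
end

section
/- Let ω be a weight function and g : [0,∞) → [0,∞) a function with g(t) = o(ω(t)) as t → ∞. Then there exists a weight function σ such that g(t) = o(σ(t)) and σ(t) = o(ω(t)). -/
open Set Real

namespace Stmt8Aux
set_option linter.dupNamespace false


/-- Affine chord of `φ` at base point `p` with slope `φ(p+1) - φ(p)`. -/
noncomputable def num (φ : ℝ → ℝ) (p s : ℝ) : ℝ :=
  φ p + (φ (p+1) - φ p) * (s - p)

theorem num_le_left {φ : ℝ → ℝ} (hconv : ConvexOn ℝ (Set.Ici 0) φ)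
    {p s : ℝ} (hp : 0 < p) (hs : 0 ≤ s) (hsp : s ≤ p) : num φ p s ≤ φ s := by
  rcases eq_or_lt_of_le hsp with h | h
  · subst h; simp [num]
  · have key := hconv.slope_mono_adjacent (x := s) (y := p) (z := p+1)
      (by exact hs) (by simp; linarith) h (by linarith)
    rw [div_le_div_iff₀ (by linarith) (by linarith)] at key
    unfold num; nlinarith

theorem num_le_right {φ : ℝ → ℝ} (hconv : ConvexOn ℝ (Set.Ici 0) φ)
    {p s : ℝ} (hp : 0 ≤ p) (hs : p + 1 ≤ s) : num φ p s ≤ φ s := by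
  rcases eq_or_lt_of_le hs with h | h
  · rw [← h]; unfold num; ring_nf; rfl
  · have key := hconv.slope_mono_adjacent (x := p) (y := p+1) (z := s)
      (by exact hp) (by exact le_trans hp (by linarith)) (by linarith) h
    rw [div_le_div_iff₀ (by linarith) (by linarith)] at key
    unfold num; nlinarith

theorem num_slope_nonneg {φ : ℝ → ℝ} (hmono : MonotoneOn φ (Set.Ici 0))
    {p : ℝ} (hp : 0 ≤ p) : 0 ≤ φ (p+1) - φ p := by
  have := hmono (show p ∈ Set.Ici (0:ℝ) from hp)
    (show p+1 ∈ Set.Ici (0:ℝ) by simp; linarith) (by linarith)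
  linarith

theorem num_le_all {φ : ℝ → ℝ} (hconv : ConvexOn ℝ (Set.Ici 0) φ)
    (hmono : MonotoneOn φ (Set.Ici 0))
    {p s : ℝ} (hp : 0 < p) (hs : 0 ≤ s) : num φ p s ≤ φ (s+1) := by
  have hc := num_slope_nonneg hmono hp.le
  rcases le_or_gt s p with h | h
  · exact le_trans (num_le_left hconv hp hs h)
      (hmono hs (by simp; linarith) (by linarith))
  · rcases le_or_gt (p+1) s with h2 | h2
    · exact le_trans (num_le_right hconv hp.le h2)
        (hmono hs (by simp; linarith) (by linarith))
    · have : num φ p s ≤ φ (p+1) := by unfold num; nlinarith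
      exact le_trans this (hmono (by simp; linarith) (by simp; linarith) (by linarith))

theorem num_zero {φ : ℝ → ℝ} (hconv : ConvexOn ℝ (Set.Ici 0) φ)
    (hφ0 : φ 0 = 0) {p : ℝ} (hp : 0 < p) : num φ p 0 ≤ 0 := by
  have key := hconv.slope_mono_adjacent (x := 0) (y := p) (z := p+1)
    (by exact Set.self_mem_Ici) (by simp; linarith) hp (by linarith)
  rw [hφ0, div_le_div_iff₀ (by linarith) (by linarith)] at key
  unfold num; nlinarith

theorem num_ge {φ : ℝ → ℝ} {p s : ℝ} (hc : 0 ≤ φ (p+1) - φ p) (hs : p ≤ s) :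
    φ p ≤ num φ p s := by unfold num; nlinarith

theorem num_mono {φ : ℝ → ℝ} {p : ℝ} (hc : 0 ≤ φ (p+1) - φ p) {s s' : ℝ}
    (h : s ≤ s') : num φ p s ≤ num φ p s' := by unfold num; nlinarith

theorem num_affine {φ : ℝ → ℝ} {p : ℝ} {x y a b : ℝ} (hab : a + b = 1) :
    num φ p (a * x + b * y) = a * num φ p x + b * num φ p y := by
  unfold num; have hb : b = 1 - a := by linarith
  subst hb; ring
/-- Hypotheses for the construction. -/
structure Setup (φ : ℝ → ℝ) (m : ℕ → ℝ) : Prop where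
  conv : ConvexOn ℝ (Set.Ici 0) φ
  mono : MonotoneOn φ (Set.Ici 0)
  zero : φ 0 = 0
  nonneg : ∀ s, 0 ≤ φ s
  m_one : ∀ n, 1 ≤ m n
  m_mono : Monotone m

noncomputable def lineF (φ : ℝ → ℝ) (m : ℕ → ℝ) (n : ℕ) (s : ℝ) : ℝ :=
  max 0 (num φ ((n : ℝ) + 1) s / m n)

noncomputable def psi (φ : ℝ → ℝ) (m : ℕ → ℝ) (s : ℝ) : ℝ := ⨆ n, lineF φ m n s

variable {φ : ℝ → ℝ} {m : ℕ → ℝ}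

theorem Setup.m_pos (H : Setup φ m) (n : ℕ) : 0 < m n := lt_of_lt_of_le one_pos (H.m_one n)

theorem p_pos (n : ℕ) : (0:ℝ) < (n:ℝ) + 1 := by positivity

theorem lineF_nonneg (n : ℕ) (s : ℝ) : 0 ≤ lineF φ m n s := le_max_left _ _

/-- Generic upper bound: if the chord value is `≤ a` and `0 ≤ a`, then `lineF ≤ a`. -/
theorem lineF_le (H : Setup φ m) {n : ℕ} {s : ℝ} {a : ℝ}
    (h : num φ ((n:ℝ)+1) s ≤ a) (ha : 0 ≤ a) : lineF φ m n s ≤ a := by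
  apply max_le ha
  rcases le_or_gt 0 (num φ ((n:ℝ)+1) s) with h0 | h0
  · exact le_trans (div_le_self h0 (H.m_one n)) h
  · exact le_trans (le_of_lt (div_neg_of_neg_of_pos h0 (H.m_pos n))) ha

theorem lineF_le_all (H : Setup φ m) {n : ℕ} {s : ℝ} (hs : 0 ≤ s) :
    lineF φ m n s ≤ φ (s+1) :=
  lineF_le H (num_le_all H.conv H.mono (p_pos n) hs) (H.nonneg _)

theorem bddF (H : Setup φ m) {s : ℝ} (hs : 0 ≤ s) :
    BddAbove (Set.range fun n => lineF φ m n s) := by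
  refine ⟨φ (s+1), ?_⟩
  rintro _ ⟨n, rfl⟩
  exact lineF_le_all H hs

theorem le_psi (H : Setup φ m) {s : ℝ} (hs : 0 ≤ s) (n : ℕ) :
    lineF φ m n s ≤ psi φ m s := le_ciSup (bddF H hs) n

theorem psi_nonneg (H : Setup φ m) {s : ℝ} (hs : 0 ≤ s) : 0 ≤ psi φ m s :=
  le_trans (lineF_nonneg 0 s) (le_psi H hs 0)

theorem psi_le {s : ℝ} {a : ℝ} (h : ∀ n, lineF φ m n s ≤ a) : psi φ m s ≤ a :=
  ciSup_le h

theorem psi_zero (H : Setup φ m) : psi φ m 0 = 0 := by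
  refine le_antisymm (psi_le fun n => ?_) (psi_nonneg H le_rfl)
  apply max_le le_rfl
  exact div_nonpos_of_nonpos_of_nonneg (num_zero H.conv H.zero (p_pos n)) (H.m_pos n).le

theorem lineF_mono (H : Setup φ m) (n : ℕ) {s s' : ℝ} (h : s ≤ s') :
    lineF φ m n s ≤ lineF φ m n s' := by
  apply max_le (le_max_left _ _)
  refine le_trans ?_ (le_max_right _ _)
  exact (div_le_div_iff_of_pos_right (H.m_pos n)).mpr
    (num_mono (num_slope_nonneg H.mono (p_pos n).le) h)

theorem psi_mono (H : Setup φ m) {x y : ℝ} (hx : 0 ≤ x) (h : x ≤ y) :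
    psi φ m x ≤ psi φ m y :=
  psi_le fun n => le_trans (lineF_mono H n h) (le_psi H (le_trans hx h) n)

theorem psi_convex (H : Setup φ m) : ConvexOn ℝ (Set.Ici 0) (psi φ m) := by
  refine ⟨convex_Ici 0, fun x hx y hy a b ha hb hab => ?_⟩
  have hxy : a • x + b • y ∈ Set.Ici (0:ℝ) := (convex_Ici 0) hx hy ha hb hab
  simp only [smul_eq_mul] at *
  refine psi_le fun n => ?_
  have haff : num φ ((n:ℝ)+1) (a * x + b * y)
      = a * num φ ((n:ℝ)+1) x + b * num φ ((n:ℝ)+1) y := num_affine hab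
  have key : lineF φ m n (a*x+b*y) ≤ a * lineF φ m n x + b * lineF φ m n y := by
    apply max_le (add_nonneg (mul_nonneg ha (lineF_nonneg n x))
      (mul_nonneg hb (lineF_nonneg n y)))
    rw [haff, add_div]
    have h1 : a * num φ ((n:ℝ)+1) x / m n ≤ a * lineF φ m n x := by
      rw [mul_div_assoc]
      exact mul_le_mul_of_nonneg_left (le_max_right _ _) ha
    have h2 : b * num φ ((n:ℝ)+1) y / m n ≤ b * lineF φ m n y := by
      rw [mul_div_assoc]
      exact mul_le_mul_of_nonneg_left (le_max_right _ _) hb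
    linarith
  calc lineF φ m n (a*x+b*y) ≤ a * lineF φ m n x + b * lineF φ m n y := key
    _ ≤ a * psi φ m x + b * psi φ m y := by
        have := le_psi H hx n; have := le_psi H hy n
        have h1 := mul_le_mul_of_nonneg_left (le_psi H hx n) ha
        have h2 := mul_le_mul_of_nonneg_left (le_psi H hy n) hb
        linarith

theorem psi_le_phi_near0 (H : Setup φ m) {s : ℝ} (hs : 0 ≤ s) (hs1 : s ≤ 1) :
    psi φ m s ≤ φ s := by
  refine psi_le fun n => lineF_le H ?_ (H.nonneg s)
  refine num_le_left H.conv (p_pos n) hs ?_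
  have : (1:ℝ) ≤ (n:ℝ) + 1 := by
    have := Nat.cast_nonneg (α := ℝ) n; linarith
  linarith

theorem psi_continuousOn (H : Setup φ m) (hcont : Continuous φ) :
    ContinuousOn (psi φ m) (Set.Ici 0) := by
  have hIoi : ContinuousOn (psi φ m) (Set.Ioi 0) :=
    ((psi_convex H).subset Set.Ioi_subset_Ici_self (convex_Ioi 0)).continuousOn isOpen_Ioi
  intro x hx
  rcases eq_or_lt_of_le (show (0:ℝ) ≤ x from hx) with h | h
  · subst h
    have hφ : Filter.Tendsto φ (nhdsWithin 0 (Set.Ici 0)) (nhds 0) := by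
      simpa [H.zero] using (hcont.tendsto 0).mono_left nhdsWithin_le_nhds
    have key : Filter.Tendsto (psi φ m) (nhdsWithin 0 (Set.Ici 0)) (nhds 0) := by
      apply tendsto_of_tendsto_of_tendsto_of_le_of_le' tendsto_const_nhds hφ
      · filter_upwards [self_mem_nhdsWithin] with s hs
        exact psi_nonneg H hs
      · have h1 : ∀ᶠ s in nhdsWithin (0:ℝ) (Set.Ici 0), s < 1 :=
          Filter.Eventually.filter_mono nhdsWithin_le_nhds (eventually_lt_nhds zero_lt_one)
        filter_upwards [self_mem_nhdsWithin, h1] with s hs hs1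
        exact psi_le_phi_near0 H hs hs1.le
    simpa [ContinuousWithinAt, psi_zero H] using key
  · exact ((hIoi x h).continuousAt (isOpen_Ioi.mem_nhds h)).continuousWithinAt

theorem lineF_le_div (H : Setup φ m) {n : ℕ} {s : ℝ} {a : ℝ}
    (h : num φ ((n:ℝ)+1) s ≤ a) (ha : 0 ≤ a) : lineF φ m n s ≤ a / m n := by
  apply max_le (div_nonneg ha (H.m_pos n).le)
  exact (div_le_div_iff_of_pos_right (H.m_pos n)).mpr h

theorem div_le_lineF {n : ℕ} {s : ℝ} :
    num φ ((n:ℝ)+1) s / m n ≤ lineF φ m n s := le_max_right _ _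


set_option linter.dupNamespace false

open Classical in
/-- Catch-up counter: increases by one each time the threshold of the next level is passed. -/
noncomputable def mu (B : ℕ → ℝ) : ℕ → ℕ
  | 0 => 1
  | n+1 => if B (mu B n) ≤ ((n:ℝ)+1) then mu B n + 1 else mu B n

theorem mu_succ_eq (B : ℕ → ℝ) (n : ℕ) :
    mu B (n+1) = if B (mu B n) ≤ ((n:ℝ)+1) then mu B n + 1 else mu B n := rfl

theorem mu_one_le (B : ℕ → ℝ) : ∀ n, 1 ≤ mu B n := by
  intro n
  induction n with
  | zero => exact le_rfl
  | succ k ih => rw [mu_succ_eq]; split_ifs <;> omega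

theorem mu_mono (B : ℕ → ℝ) : Monotone (mu B) := by
  apply monotone_nat_of_le_succ
  intro n; rw [mu_succ_eq]; split_ifs <;> omega

theorem mu_succ_le (B : ℕ → ℝ) (n : ℕ) : mu B (n+1) ≤ mu B n + 1 := by
  rw [mu_succ_eq]; split_ifs <;> omega

theorem mu_inv (B : ℕ → ℝ) : ∀ n, 2 ≤ mu B n → B (mu B n - 1) ≤ (n:ℝ) := by
  intro n
  induction n with
  | zero => intro h; simp [mu] at h
  | succ k ih =>
    rw [mu_succ_eq]; split_ifs with h
    · intro _; simpa using h
    · intro h2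
      refine le_trans (ih h2) ?_
      push_cast; linarith

theorem mu_exists_ge (B : ℕ → ℝ) (v : ℕ) : ∃ n, v ≤ mu B n := by
  induction v with
  | zero => exact ⟨0, Nat.zero_le _⟩
  | succ v ih =>
    obtain ⟨n, hn⟩ := ih
    set M := max n (Nat.ceil (B v)) with hM
    have hvM : v ≤ mu B M := le_trans hn (mu_mono B (le_max_left _ _))
    rcases lt_or_eq_of_le hvM with h | h
    · exact ⟨M, h⟩
    · refine ⟨M+1, ?_⟩
      have hcond : B v ≤ ((M:ℝ)+1) := by
        refine le_trans (Nat.le_ceil (B v)) ?_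
        have : (Nat.ceil (B v) : ℝ) ≤ (M:ℝ) := by
          exact_mod_cast le_max_right n (Nat.ceil (B v))
        linarith
      rw [mu_succ_eq, ← h, if_pos hcond]

theorem mu_unbounded (B : ℕ → ℝ) (v : ℕ) : ∃ N, ∀ n ≥ N, v ≤ mu B n := by
  obtain ⟨n, hn⟩ := mu_exists_ge B v
  exact ⟨n, fun k hk => le_trans hn (mu_mono B hk)⟩



end Stmt8Aux

set_option maxHeartbeats 1000000 in
/-- (Braun–Meise–Taylor, Lemma 1.7.)  Let `ω` be a weight function and
`g : [0,∞) → [0,∞)` with `g(t) = o(ω(t))`.  Then there is a weight function `σ`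
with `g(t) = o(σ(t))` and `σ(t) = o(ω(t))`. -/
theorem stmt8 (ω g : ℝ → ℝ) (hω : IsWeightFunction ω)
    (hg : ∀ t, 0 ≤ g t) (hgo : LittleO g ω) :
    ∃ σ : ℝ → ℝ, IsWeightFunction σ ∧ LittleO g σ ∧ LittleO σ ω := by
  classical
  open Stmt8Aux in
  -- the function φ(s) = ω(eˢ)
  set φ : ℝ → ℝ := fun s => ω (Real.exp s) with hφdef
  have hφnn : ∀ s, 0 ≤ φ s := fun s => hω.nonneg _
  have hφmonoAll : Monotone φ := fun a b hab =>
    hω.mono (Set.mem_Ici.mpr (Real.exp_pos a).le) (Set.mem_Ici.mpr (Real.exp_pos b).le)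
      (Real.exp_le_exp.mpr hab)
  have hφmono : MonotoneOn φ (Set.Ici 0) := hφmonoAll.monotoneOn _
  have hφ0 : φ 0 = 0 := by
    have := hω.eq_zero 1 ⟨zero_le_one, le_rfl⟩
    simpa [hφdef] using this
  have hφconv : ConvexOn ℝ (Set.Ici 0) φ := hω.delta
  have hφcont : Continuous φ :=
    hω.continuous.comp_continuous Real.continuous_exp
      (fun s => Set.mem_Ici.mpr (Real.exp_pos s).le)
  -- doubling constants
  obtain ⟨C0, hC0, T0, hT0⟩ := hω.alpha
  set K : ℝ := max C0 1 with hKdef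
  have hK1 : (1:ℝ) ≤ K := le_max_right _ _
  set T : ℝ := max T0 1 with hTdef
  have hT1 : (1:ℝ) ≤ T := le_max_right _ _
  have hdblω : ∀ t ≥ T, ω (2*t) ≤ K * ω t := by
    intro t ht
    have h1 := hT0 t (le_trans (le_max_left _ _) ht)
    have h2 := mul_le_mul_of_nonneg_right (le_max_left C0 1) (hω.nonneg t)
    exact le_trans h1 h2
  set K₁ : ℝ := K^2 with hK₁def
  have hK₁1 : (1:ℝ) ≤ K₁ := by nlinarith
  have hK₁0 : (0:ℝ) ≤ K₁ := by linarith
  have hK₁p : (0:ℝ) < K₁ := by linarith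
  set S₀ : ℝ := max (Real.log T) 0 with hS₀def
  have HD : ∀ s, S₀ ≤ s → φ (s+1) ≤ K₁ * φ s := by
    intro s hs
    have hTpos : (0:ℝ) < T := by linarith
    have hes : T ≤ Real.exp s := by
      rw [← Real.exp_log hTpos]
      exact Real.exp_le_exp.mpr (le_trans (le_max_left _ _) hs)
    have hes1 : (1:ℝ) ≤ Real.exp s := le_trans hT1 hes
    have step1 : φ (s+1) ≤ ω (2*(2*Real.exp s)) := by
      apply hω.mono (Set.mem_Ici.mpr (Real.exp_pos _).le)
        (Set.mem_Ici.mpr (by positivity))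
      rw [Real.exp_add]
      have := Real.exp_one_lt_d9
      nlinarith [Real.exp_pos s]
    have step2 : ω (2*(2*Real.exp s)) ≤ K * ω (2*Real.exp s) :=
      hdblω (2*Real.exp s) (by nlinarith)
    have step3 : ω (2*Real.exp s) ≤ K * ω (Real.exp s) := hdblω (Real.exp s) hes
    have : φ (s+1) ≤ K * (K * ω (Real.exp s)) := by
      refine le_trans step1 (le_trans step2 ?_)
      exact mul_le_mul_of_nonneg_left step3 (by linarith)
    calc φ (s+1) ≤ K * (K * ω (Real.exp s)) := this
      _ = K₁ * φ s := by rw [hK₁def]; ring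
  have HD2 : ∀ s, S₀ ≤ s → φ (s+2) ≤ K₁^2 * φ s := by
    intro s hs
    have h1 : φ (s+2) ≤ K₁ * φ (s+1) := by
      have := HD (s+1) (by linarith)
      convert this using 2 <;> ring
    have h2 := HD s hs
    nlinarith [hφnn (s+1)]
  -- superlinearity of φ
  have HSL : ∀ A : ℝ, 0 < A → ∃ s₁ : ℝ, ∀ s ≥ s₁, A * s ≤ φ s := by
    intro A hA
    obtain ⟨t₀, ht₀⟩ := hω.gamma (1/A) (by positivity)
    refine ⟨max (Real.log (max t₀ 1)) 1, fun s hs => ?_⟩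
    have hts : max t₀ 1 ≤ Real.exp s := by
      rw [← Real.exp_log (show (0:ℝ) < max t₀ 1 by positivity)]
      exact Real.exp_le_exp.mpr (le_trans (le_max_left _ _) hs)
    have h := ht₀ (Real.exp s) (le_trans (le_max_left t₀ 1) hts)
    rw [Real.log_exp] at h
    calc A * s ≤ A * ((1/A) * φ s) := mul_le_mul_of_nonneg_left h hA.le
      _ = φ s := by field_simp
  -- smallness of g against φ
  have HGS : ∀ A : ℝ, 0 < A → ∃ s₁ : ℝ, ∀ s ≥ s₁, A * g (Real.exp s) ≤ φ s := by
    intro A hA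
    obtain ⟨t₀, ht₀⟩ := hgo (1/A) (by positivity)
    refine ⟨Real.log (max t₀ 1), fun s hs => ?_⟩
    have hts : max t₀ 1 ≤ Real.exp s := by
      rw [← Real.exp_log (show (0:ℝ) < max t₀ 1 by positivity)]
      exact Real.exp_le_exp.mpr hs
    have h := ht₀ (Real.exp s) (le_trans (le_max_left t₀ 1) hts)
    calc A * g (Real.exp s) ≤ A * ((1/A) * φ s) := mul_le_mul_of_nonneg_left h hA.le
      _ = φ s := by field_simp
  -- level thresholds
  have hlev : ∀ k : ℕ, ∃ b : ℝ, ∀ s ≥ b,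
      (((k:ℝ)+1)^2 * (2*K₁)) * g (Real.exp s) ≤ φ s ∧
      (((k:ℝ)+1)^2 * (2*K₁)) * s ≤ φ s := by
    intro k
    have hA : (0:ℝ) < ((k:ℝ)+1)^2 * (2*K₁) :=
      mul_pos (by positivity) (by linarith)
    obtain ⟨b1, h1⟩ := HGS _ hA
    obtain ⟨b2, h2⟩ := HSL _ hA
    exact ⟨max b1 b2, fun s hs =>
      ⟨h1 s (le_trans (le_max_left _ _) hs), h2 s (le_trans (le_max_right _ _) hs)⟩⟩
  choose B hB using hlev
  set μ : ℕ → ℕ := Stmt8Aux.mu B with hμdef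
  set mm : ℕ → ℝ := fun n => (μ n : ℝ) with hmmdef
  have HS : Stmt8Aux.Setup φ mm :=
    ⟨hφconv, hφmono, hφ0, hφnn,
      fun n => by simp only [hmmdef, hμdef]; exact_mod_cast Stmt8Aux.mu_one_le B n,
      fun a b h => by simp only [hmmdef, hμdef]; exact_mod_cast Stmt8Aux.mu_mono B h⟩
  set ψ : ℝ → ℝ := Stmt8Aux.psi φ mm with hψdef
  set σf : ℝ → ℝ := fun t => ψ (Real.log (max |t| 1)) with hσdef
  have hτmem : ∀ t : ℝ, 0 ≤ Real.log (max |t| 1) :=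
    fun t => Real.log_nonneg (le_max_right _ _)
  have hσ_eq : ∀ t : ℝ, 1 ≤ t → σf t = ψ (Real.log t) := by
    intro t ht
    have : max |t| 1 = t := by
      rw [abs_of_nonneg (by linarith)]
      exact max_eq_left ht
    rw [hσdef]; simp only [this]
  have hσ0 : ∀ t ∈ Set.Icc (0:ℝ) 1, σf t = 0 := by
    intro t ht
    have : max |t| 1 = 1 := max_eq_right (by rw [abs_of_nonneg ht.1]; exact ht.2)
    rw [hσdef]; simp only [this, Real.log_one]
    exact Stmt8Aux.psi_zero HS
  -- lower bound for ψ
  have key_low : ∀ s : ℝ, 2 ≤ s → S₀ + 1 ≤ s →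
      φ (((Nat.floor s - 1 : ℕ):ℝ) + 1) ≤ mm (Nat.floor s - 1) * ψ s ∧
      φ s ≤ K₁ * (mm (Nat.floor s - 1) * ψ s) := by
    intro s hs2 hsS
    set n₀ : ℕ := Nat.floor s - 1 with hn₀def
    have hs0 : (0:ℝ) ≤ s := by linarith
    have hfl : ((Nat.floor s : ℕ) : ℝ) ≤ s := Nat.floor_le hs0
    have hfl2 : s < ((Nat.floor s : ℕ) : ℝ) + 1 := Nat.lt_floor_add_one s
    have hfl2' : 2 ≤ Nat.floor s := Nat.le_floor (by exact_mod_cast hs2)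
    have hcast : ((n₀ : ℕ) : ℝ) + 1 = ((Nat.floor s : ℕ) : ℝ) := by
      rw [hn₀def]
      exact_mod_cast congrArg (Nat.cast : ℕ → ℝ) (show (Nat.floor s - 1) + 1 = Nat.floor s by omega)
    have hp1 : ((n₀:ℕ):ℝ) + 1 ≤ s := by rw [hcast]; exact hfl
    have hps : s ≤ (((n₀:ℕ):ℝ) + 1) + 1 := by rw [hcast]; linarith
    have hslope : 0 ≤ φ ((((n₀:ℕ):ℝ)+1)+1) - φ (((n₀:ℕ):ℝ)+1) :=
      Stmt8Aux.num_slope_nonneg hφmono (by positivity)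
    have h1 : φ (((n₀:ℕ):ℝ)+1) / mm n₀ ≤ ψ s := by
      refine le_trans ?_ (le_trans
        (Stmt8Aux.div_le_lineF (φ := φ) (m := mm) (n := n₀) (s := s))
        (Stmt8Aux.le_psi HS hs0 n₀))
      exact (div_le_div_iff_of_pos_right (HS.m_pos n₀)).mpr (Stmt8Aux.num_ge hslope hp1)
    have h2 : φ (((n₀:ℕ):ℝ)+1) ≤ mm n₀ * ψ s := by
      rw [div_le_iff₀ (HS.m_pos n₀), mul_comm] at h1
      exact h1
    refine ⟨h2, ?_⟩
    have h3 : φ s ≤ φ ((((n₀:ℕ):ℝ)+1)+1) := hφmonoAll hps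
    have h4 : φ ((((n₀:ℕ):ℝ)+1)+1) ≤ K₁ * φ (((n₀:ℕ):ℝ)+1) :=
      HD _ (by rw [hcast]; linarith)
    linarith [h3, h4, mul_le_mul_of_nonneg_left h2 hK₁0]
  -- doubling inequality for ψ
  have hlog2a : (0:ℝ) ≤ Real.log 2 := Real.log_nonneg one_le_two
  have hlog2b : Real.log 2 ≤ 1 := by have := Real.log_two_lt_d9; linarith
  have hK₁3 : (1:ℝ) ≤ K₁^3 := one_le_pow₀ hK₁1
  have hK₁3nn : (0:ℝ) ≤ K₁^3 := by linarith
  have key_alpha : ∀ s : ℝ, 3 ≤ s → S₀ + 1 ≤ s →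
      ψ (s + Real.log 2) ≤ (2 * K₁^3) * ψ s := by
    intro s hs3 hsS
    have hs0 : (0:ℝ) ≤ s := by linarith
    have hψnn := Stmt8Aux.psi_nonneg HS hs0
    apply Stmt8Aux.psi_le
    intro n
    have hpc : (0:ℝ) ≤ ((n:ℕ):ℝ) := Nat.cast_nonneg n
    have hslope : 0 ≤ φ ((((n:ℕ):ℝ)+1)+1) - φ (((n:ℕ):ℝ)+1) :=
      Stmt8Aux.num_slope_nonneg hφmono (by positivity)
    rcases le_or_gt (((n:ℕ):ℝ) + 2) s with hcase | hcase
    · -- old line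
      have hnum1 : φ ((((n:ℕ):ℝ)+1)+1) - φ (((n:ℕ):ℝ)+1) ≤ Stmt8Aux.num φ (((n:ℕ):ℝ)+1) s := by
        unfold Stmt8Aux.num
        nlinarith [hφnn (((n:ℕ):ℝ)+1),
          mul_nonneg hslope (show (0:ℝ) ≤ s - (((n:ℕ):ℝ)+1) - 1 by linarith)]
      have hnum : Stmt8Aux.num φ (((n:ℕ):ℝ)+1) (s + Real.log 2)
          ≤ 2 * Stmt8Aux.num φ (((n:ℕ):ℝ)+1) s := by
        unfold Stmt8Aux.num at hnum1 ⊢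
        nlinarith [mul_nonneg hslope (show (0:ℝ) ≤ 1 - Real.log 2 by linarith)]
      have hF : Stmt8Aux.lineF φ mm n (s + Real.log 2) ≤ 2 * ψ s := by
        apply max_le (by linarith)
        have d1 : Stmt8Aux.num φ (((n:ℕ):ℝ)+1) (s + Real.log 2) / mm n
            ≤ 2 * (Stmt8Aux.num φ (((n:ℕ):ℝ)+1) s / mm n) := by
          rw [← mul_div_assoc]
          exact (div_le_div_iff_of_pos_right (HS.m_pos n)).mpr hnum
        refine le_trans d1 ?_
        have h6 := le_trans (Stmt8Aux.div_le_lineF (φ:=φ) (m:=mm) (n:=n) (s:=s))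
          (Stmt8Aux.le_psi HS hs0 n)
        linarith
      refine le_trans hF ?_
      linarith [mul_nonneg (show (0:ℝ) ≤ K₁^3 - 1 by linarith) hψnn]
    · -- recent line
      have h2s : (2:ℝ) ≤ s := by linarith
      obtain ⟨hfirst, hlow⟩ := key_low s h2s hsS
      have hn₀n : Nat.floor s - 1 ≤ n := by
        have hfl : ((Nat.floor s : ℕ) : ℝ) ≤ s := Nat.floor_le hs0
        have h2' : ((Nat.floor s:ℕ):ℝ) < ((n:ℕ):ℝ) + 2 := by linarith
        have h2 : Nat.floor s < n + 2 := by exact_mod_cast h2'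
        omega
      have hmmle : mm (Nat.floor s - 1) ≤ mm n := HS.m_mono hn₀n
      have hb1 : Stmt8Aux.lineF φ mm n (s + Real.log 2) ≤ φ (s + Real.log 2 + 1) / mm n :=
        Stmt8Aux.lineF_le_div HS
          (Stmt8Aux.num_le_all hφconv hφmono (by positivity) (by linarith)) (hφnn _)
      have hφb : φ (s + Real.log 2 + 1) ≤ K₁^2 * φ s :=
        le_trans (hφmonoAll (by linarith : s + Real.log 2 + 1 ≤ s + 2)) (HD2 s (by linarith))
      refine le_trans hb1 ?_
      rw [div_le_iff₀ (HS.m_pos n)]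
      have hψs := Stmt8Aux.psi_nonneg HS hs0
      calc φ (s + Real.log 2 + 1) ≤ K₁^2 * φ s := hφb
        _ ≤ K₁^2 * (K₁ * (mm (Nat.floor s - 1) * ψ s)) :=
            mul_le_mul_of_nonneg_left hlow (sq_nonneg K₁)
        _ = (K₁^3 * ψ s) * mm (Nat.floor s - 1) := by ring
        _ ≤ (K₁^3 * ψ s) * mm n :=
            mul_le_mul_of_nonneg_left hmmle (mul_nonneg hK₁3nn hψs)
        _ ≤ (2 * K₁^3 * ψ s) * mm n := by
            have h9 : K₁^3 * ψ s ≤ 2 * K₁^3 * ψ s := by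
              linarith [mul_nonneg hK₁3nn hψs]
            exact mul_le_mul_of_nonneg_right h9 (HS.m_pos n).le
  -- guaranteed bounds at the active level
  have key_bounds : ∀ s : ℝ, 2 ≤ s → 2 ≤ μ (Nat.floor s - 1) →
      ((mm (Nat.floor s - 1))^2 * (2*K₁)) * g (Real.exp s) ≤ φ s ∧
      ((mm (Nat.floor s - 1))^2 * (2*K₁)) * s ≤ φ s := by
    intro s hs2 hμ2
    set n₀ : ℕ := Nat.floor s - 1 with hn₀def
    have hμ2' : 2 ≤ Stmt8Aux.mu B n₀ := by rw [← hμdef]; exact hμ2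
    have hinv : B (Stmt8Aux.mu B n₀ - 1) ≤ ((n₀:ℕ):ℝ) := Stmt8Aux.mu_inv B n₀ hμ2'
    have hn₀s : ((n₀:ℕ):ℝ) ≤ s := by
      have hfl : ((Nat.floor s:ℕ):ℝ) ≤ s := Nat.floor_le (by linarith)
      have h5 : ((n₀:ℕ):ℝ) ≤ ((Nat.floor s:ℕ):ℝ) := by exact_mod_cast Nat.sub_le _ _
      linarith
    have h := hB (Stmt8Aux.mu B n₀ - 1) s (le_trans hinv hn₀s)
    have hc : ((Stmt8Aux.mu B n₀ - 1 : ℕ):ℝ) + 1 = mm n₀ := by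
      have h1 : 1 ≤ Stmt8Aux.mu B n₀ := Stmt8Aux.mu_one_le B n₀
      rw [Nat.cast_sub h1]
      simp only [hmmdef, hμdef]
      push_cast
      ring
    rw [hc] at h
    exact h
  -- g = o(σ)
  have hgoσ : LittleO g σf := by
    intro ε hε
    obtain ⟨N, hN⟩ := Stmt8Aux.mu_unbounded B (max 2 (Nat.ceil (1/ε)))
    refine ⟨Real.exp (max ((N:ℝ)+3) (max (S₀+1) 3)), fun t ht => ?_⟩
    set s : ℝ := Real.log t with hsdef2
    have ht0 : (0:ℝ) < t := lt_of_lt_of_le (Real.exp_pos _) ht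
    have hslb : max ((N:ℝ)+3) (max (S₀+1) 3) ≤ s := by
      rw [hsdef2, ← Real.log_exp (max ((N:ℝ)+3) (max (S₀+1) 3))]
      exact Real.log_le_log (Real.exp_pos _) ht
    have hsN : (N:ℝ)+3 ≤ s := le_trans (le_max_left _ _) hslb
    have hsS : S₀+1 ≤ s := le_trans (le_trans (le_max_left _ _) (le_max_right _ _)) hslb
    have hs2 : (2:ℝ) ≤ s := by
      have := le_trans (le_trans (le_max_right _ _) (le_max_right _ _)) hslb; linarith
    have hn₀N : N ≤ Nat.floor s - 1 := by
      have hfl2 : s < ((Nat.floor s:ℕ):ℝ) + 1 := Nat.lt_floor_add_one s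
      have h2 : ((N:ℕ):ℝ) + 2 < ((Nat.floor s:ℕ):ℝ) := by linarith
      have h3 : N + 2 < Nat.floor s := by exact_mod_cast h2
      omega
    have hμn₀ := hN _ hn₀N
    have hμ2 : 2 ≤ μ (Nat.floor s - 1) := by
      rw [hμdef]; exact le_trans (le_max_left _ _) hμn₀
    have hεμ : 1/ε ≤ mm (Nat.floor s - 1) := by
      refine le_trans (Nat.le_ceil _) ?_
      simp only [hmmdef, hμdef]
      exact_mod_cast le_trans (le_max_right _ _) hμn₀
    obtain ⟨hb1, _⟩ := key_bounds s hs2 hμ2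
    obtain ⟨_, hlow⟩ := key_low s hs2 hsS
    have hψnn := Stmt8Aux.psi_nonneg HS (show (0:ℝ) ≤ s by linarith)
    have hmpos := HS.m_pos (Nat.floor s - 1)
    have ht1 : (1:ℝ) ≤ t := le_trans (Real.one_le_exp (le_trans (by positivity) (le_max_left ((N:ℝ)+3) _))) ht
    rw [hσ_eq t ht1]
    have hgt : g t = g (Real.exp s) := by rw [hsdef2, Real.exp_log ht0]
    rw [hgt]
    have hεm : 1 ≤ ε * mm (Nat.floor s - 1) := by
      rw [div_le_iff₀ hε] at hεμ
      linarith
    set M : ℝ := mm (Nat.floor s - 1)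
    have h4 : 2*K₁*M^2 * g (Real.exp s) ≤ K₁ * (M * ψ s) := by
      have := le_trans hb1 hlow
      linarith [this]
    have h5 : 2 * (M * g (Real.exp s)) ≤ ψ s := by
      have hK₁m : 0 < K₁ * M := mul_pos (by linarith) hmpos
      rw [show 2*K₁*M^2 * g (Real.exp s) = (K₁*M) * (2*(M * g (Real.exp s))) by ring,
        show K₁*(M * ψ s) = (K₁*M) * ψ s by ring] at h4
      exact le_of_mul_le_mul_left h4 hK₁m
    linarith [mul_le_mul_of_nonneg_left h5 hε.le,
      mul_nonneg (show (0:ℝ) ≤ ε*M - 1 by linarith) (hg (Real.exp s)), hg (Real.exp s)]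
  -- σ = o(ω)
  have hσω : LittleO σf ω := by
    intro ε hε
    obtain ⟨N, hN⟩ := Stmt8Aux.mu_unbounded B (Nat.ceil (2*K₁/ε))
    have hmN : 2*K₁/ε ≤ mm N := by
      refine le_trans (Nat.le_ceil _) ?_
      simp only [hmmdef, hμdef]
      exact_mod_cast hN N le_rfl
    have hεmN : 2*K₁ ≤ ε * mm N := by
      rw [div_le_iff₀ hε] at hmN; linarith
    obtain ⟨s₂, hs₂⟩ := HSL (2*(φ ((N:ℝ)+2)+1)/ε)
      (div_pos (by linarith [hφnn ((N:ℝ)+2)]) hε)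
    set Sb : ℝ := max (max s₂ 1) S₀ with hSbdef
    have hψφ : ∀ x, Sb ≤ x → ψ x ≤ ε * φ x := by
      intro x hx
      have hx1 : (1:ℝ) ≤ x := le_trans (le_trans (le_max_right s₂ 1) (le_max_left _ _)) hx
      have hx0 : (0:ℝ) ≤ x := by linarith
      have hxS₀ : S₀ ≤ x := le_trans (le_max_right _ _) hx
      have hxs₂ : s₂ ≤ x := le_trans (le_trans (le_max_left s₂ 1) (le_max_left _ _)) hx
      apply Stmt8Aux.psi_le
      intro n
      rcases lt_or_ge n N with hn | hn
      · -- head lines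
        refine Stmt8Aux.lineF_le HS ?_ (mul_nonneg hε.le (hφnn x))
        have hp2 : (((n:ℕ):ℝ)+1)+1 ≤ ((N:ℕ):ℝ)+2 := by
          have : ((n:ℕ):ℝ) + 1 ≤ ((N:ℕ):ℝ) := by exact_mod_cast hn
          linarith
        have hφp : φ (((n:ℕ):ℝ)+1) ≤ φ (((N:ℕ):ℝ)+2) := hφmonoAll (by linarith)
        have hφp1 : φ ((((n:ℕ):ℝ)+1)+1) ≤ φ (((N:ℕ):ℝ)+2) := hφmonoAll hp2
        have hcx : 0 ≤ φ ((((n:ℕ):ℝ)+1)+1) - φ (((n:ℕ):ℝ)+1) :=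
          Stmt8Aux.num_slope_nonneg hφmono (by positivity)
        have hsl := hs₂ x hxs₂
        rw [div_mul_eq_mul_div, div_le_iff₀ hε] at hsl
        unfold Stmt8Aux.num
        have hxp : x - (((n:ℕ):ℝ)+1) ≤ x := by
          have : (0:ℝ) ≤ ((n:ℕ):ℝ)+1 := by positivity
          linarith
        have hc2 : φ ((((n:ℕ):ℝ)+1)+1) - φ (((n:ℕ):ℝ)+1) ≤ φ (((N:ℕ):ℝ)+2) := by
          linarith [hφnn (((n:ℕ):ℝ)+1)]
        have hcx2 : (φ ((((n:ℕ):ℝ)+1)+1) - φ (((n:ℕ):ℝ)+1)) * x ≤ φ (((N:ℕ):ℝ)+2) * x :=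
          mul_le_mul_of_nonneg_right hc2 hx0
        have hcxp : (φ ((((n:ℕ):ℝ)+1)+1) - φ (((n:ℕ):ℝ)+1)) * (x - (((n:ℕ):ℝ)+1))
            ≤ (φ ((((n:ℕ):ℝ)+1)+1) - φ (((n:ℕ):ℝ)+1)) * x :=
          mul_le_mul_of_nonneg_left hxp hcx
        have hNx : φ (((N:ℕ):ℝ)+2) * 1 ≤ φ (((N:ℕ):ℝ)+2) * x :=
          mul_le_mul_of_nonneg_left hx1 (hφnn (((N:ℕ):ℝ)+2))
        linarith [hφp, hcx2, hcxp, hNx]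
      · -- tail lines
        have hmn : mm N ≤ mm n := HS.m_mono hn
        have hnum : Stmt8Aux.num φ (((n:ℕ):ℝ)+1) x ≤ K₁ * φ x := by
          rcases le_or_gt x (((n:ℕ):ℝ)+1) with hc1 | hc1
          · refine le_trans (Stmt8Aux.num_le_left hφconv (by positivity) hx0 hc1) ?_
            nlinarith [hφnn x, hK₁1]
          · rcases le_or_gt ((((n:ℕ):ℝ)+1)+1) x with hc2 | hc2
            · refine le_trans (Stmt8Aux.num_le_right hφconv (by positivity) hc2) ?_
              nlinarith [hφnn x, hK₁1]
            · refine le_trans (Stmt8Aux.num_le_all hφconv hφmono (by positivity) hx0) ?_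
              exact HD x hxS₀
        have hd : Stmt8Aux.lineF φ mm n x ≤ K₁ * φ x / mm n :=
          Stmt8Aux.lineF_le_div HS hnum (mul_nonneg hK₁0 (hφnn x))
        refine le_trans hd ?_
        rw [div_le_iff₀ (HS.m_pos n)]
        linarith [mul_nonneg hK₁0 (hφnn x),
          mul_le_mul_of_nonneg_right hmn (mul_nonneg hε.le (hφnn x)),
          mul_le_mul_of_nonneg_right hεmN (hφnn x)]
    refine ⟨Real.exp (max Sb 1), fun t ht => ?_⟩
    have ht0 : (0:ℝ) < t := lt_of_lt_of_le (Real.exp_pos _) ht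
    have ht1 : (1:ℝ) ≤ t := le_trans (Real.one_le_exp (le_trans zero_le_one (le_max_right _ _))) ht
    have hlt : max Sb 1 ≤ Real.log t := by
      rw [← Real.log_exp (max Sb 1)]
      exact Real.log_le_log (Real.exp_pos _) ht
    rw [hσ_eq t ht1]
    have := hψφ (Real.log t) (le_trans (le_max_left _ _) hlt)
    calc ψ (Real.log t) ≤ ε * φ (Real.log t) := this
      _ = ε * ω t := by rw [hφdef]; simp [Real.exp_log ht0]
  -- γ for σ
  have hγσ : LittleO Real.log σf := by
    intro ε hε
    obtain ⟨N, hN⟩ := Stmt8Aux.mu_unbounded B (max 2 (Nat.ceil (1/ε)))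
    refine ⟨Real.exp (max ((N:ℝ)+3) (max (S₀+1) 3)), fun t ht => ?_⟩
    set s : ℝ := Real.log t with hsdef2
    have ht0 : (0:ℝ) < t := lt_of_lt_of_le (Real.exp_pos _) ht
    have hslb : max ((N:ℝ)+3) (max (S₀+1) 3) ≤ s := by
      rw [hsdef2, ← Real.log_exp (max ((N:ℝ)+3) (max (S₀+1) 3))]
      exact Real.log_le_log (Real.exp_pos _) ht
    have hsN : (N:ℝ)+3 ≤ s := le_trans (le_max_left _ _) hslb
    have hsS : S₀+1 ≤ s := le_trans (le_trans (le_max_left _ _) (le_max_right _ _)) hslb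
    have hs2 : (2:ℝ) ≤ s := by
      have := le_trans (le_trans (le_max_right _ _) (le_max_right _ _)) hslb; linarith
    have hn₀N : N ≤ Nat.floor s - 1 := by
      have hfl2 : s < ((Nat.floor s:ℕ):ℝ) + 1 := Nat.lt_floor_add_one s
      have h2 : ((N:ℕ):ℝ) + 2 < ((Nat.floor s:ℕ):ℝ) := by linarith
      have h3 : N + 2 < Nat.floor s := by exact_mod_cast h2
      omega
    have hμn₀ := hN _ hn₀N
    have hμ2 : 2 ≤ μ (Nat.floor s - 1) := by
      rw [hμdef]; exact le_trans (le_max_left _ _) hμn₀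
    have hεμ : 1/ε ≤ mm (Nat.floor s - 1) := by
      refine le_trans (Nat.le_ceil _) ?_
      simp only [hmmdef, hμdef]
      exact_mod_cast le_trans (le_max_right _ _) hμn₀
    obtain ⟨_, hb2⟩ := key_bounds s hs2 hμ2
    obtain ⟨_, hlow⟩ := key_low s hs2 hsS
    have hψnn := Stmt8Aux.psi_nonneg HS (show (0:ℝ) ≤ s by linarith)
    have hmpos := HS.m_pos (Nat.floor s - 1)
    have ht1 : (1:ℝ) ≤ t := le_trans (Real.one_le_exp (le_trans (by positivity) (le_max_left ((N:ℝ)+3) _))) ht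
    rw [hσ_eq t ht1]
    have hεm : 1 ≤ ε * mm (Nat.floor s - 1) := by
      rw [div_le_iff₀ hε] at hεμ
      linarith
    set M : ℝ := mm (Nat.floor s - 1)
    have h4 : 2*K₁*M^2 * s ≤ K₁ * (M * ψ s) := by
      have := le_trans hb2 hlow
      linarith [this]
    have h5 : 2 * (M * s) ≤ ψ s := by
      have hK₁m : 0 < K₁ * M := mul_pos (by linarith) hmpos
      rw [show 2*K₁*M^2 * s = (K₁*M) * (2*(M * s)) by ring,
        show K₁*(M * ψ s) = (K₁*M) * ψ s by ring] at h4
      exact le_of_mul_le_mul_left h4 hK₁m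
    show s ≤ ε * ψ s
    linarith [mul_le_mul_of_nonneg_left h5 hε.le,
      mul_nonneg (show (0:ℝ) ≤ ε*M - 1 by linarith) (show (0:ℝ) ≤ s by linarith)]
  -- assemble the weight function structure
  have hσnn : ∀ t, 0 ≤ σf t := fun t => Stmt8Aux.psi_nonneg HS (hτmem t)
  have hσcont : ContinuousOn σf (Set.Ici 0) := by
    have hinner : Continuous fun t : ℝ => Real.log (max |t| 1) := by
      apply Real.continuousOn_log.comp_continuous (continuous_abs.max continuous_const)
      intro t
      simp only [Set.mem_compl_iff, Set.mem_singleton_iff]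
      positivity
    exact ((Stmt8Aux.psi_continuousOn HS hφcont).comp_continuous hinner
      (fun t => Set.mem_Ici.mpr (hτmem t))).continuousOn
  have hσmono : MonotoneOn σf (Set.Ici 0) := by
    intro a ha b hb hab
    simp only [hσdef]
    apply Stmt8Aux.psi_mono HS (hτmem a)
    apply Real.log_le_log (by positivity)
    rw [abs_of_nonneg ha, abs_of_nonneg hb]
    exact max_le_max hab le_rfl
  have hσalpha : BigO (fun t => σf (2*t)) σf := by
    refine ⟨2*K₁^3, by linarith, Real.exp (max 3 (S₀+1)), fun t ht => ?_⟩
    have ht1 : (1:ℝ) ≤ t := le_trans (Real.one_le_exp (le_trans (by norm_num) (le_max_left 3 (S₀+1)))) ht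
    have ht0 : (0:ℝ) < t := by linarith
    have hlt : max 3 (S₀+1) ≤ Real.log t := by
      rw [← Real.log_exp (max 3 (S₀+1))]
      exact Real.log_le_log (Real.exp_pos _) ht
    have h2t : σf (2*t) = ψ (Real.log t + Real.log 2) := by
      rw [hσ_eq (2*t) (by linarith)]
      rw [Real.log_mul (by norm_num) (by linarith), add_comm]
    show σf (2*t) ≤ 2*K₁^3 * σf t
    rw [h2t, hσ_eq t ht1]
    exact key_alpha (Real.log t) (le_trans (le_max_left _ _) hlt)
      (le_trans (le_max_right _ _) hlt)
  have hσbeta : BigO σf id := by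
    obtain ⟨Cb, hCb, t1, ht1⟩ := hω.beta
    obtain ⟨t2, ht2⟩ := hσω 1 one_pos
    refine ⟨Cb, hCb, max t1 t2, fun t ht => ?_⟩
    have h1 := ht2 t (le_trans (le_max_right _ _) ht)
    have h2 := ht1 t (le_trans (le_max_left _ _) ht)
    simp only [id] at h2 ⊢
    linarith
  have hσdelta : ConvexOn ℝ (Set.Ici 0) (fun s => σf (Real.exp s)) := by
    have hkey : ∀ x ∈ Set.Ici (0:ℝ), σf (Real.exp x) = ψ x := by
      intro x hx
      simp only [hσdef]
      rw [abs_of_nonneg (Real.exp_pos x).le,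
        max_eq_left (Real.one_le_exp (Set.mem_Ici.mp hx)), Real.log_exp]
    have hconv := Stmt8Aux.psi_convex HS
    refine ⟨convex_Ici 0, fun x hx y hy a b ha hb hab => ?_⟩
    have hxy : a • x + b • y ∈ Set.Ici (0:ℝ) := (convex_Ici 0) hx hy ha hb hab
    show σf (Real.exp (a • x + b • y)) ≤ a • σf (Real.exp x) + b • σf (Real.exp y)
    rw [hkey _ hxy, hkey _ hx, hkey _ hy]
    exact hconv.2 hx hy ha hb hab
  exact ⟨σf, ⟨hσnn, hσcont, hσmono, hσ0, hσalpha, hσbeta, hγσ, hσdelta⟩, hgoσ, hσω⟩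
end

section
/- Let ω be a weight function. For every h > 0 there exist h' < h and C > 0 such that for all t > 0, (1/h) ω(t) ≤ sup_{k ∈ ℕ} ( k log t − (1/h') φ*(k h') ) + C, where φ(t) = ω(e^t) and φ* is its Young conjugate. -/
/-- The Young conjugate `φ*(t) = sup_{u ≥ 0} (t·u − φ(u))`. -/
noncomputable def youngConj (φ : ℝ → ℝ) (t : ℝ) : ℝ :=
  ⨆ u : Set.Ici (0 : ℝ), (t * (u : ℝ) - φ u)

namespace Stmt15Aux

lemma phi_mono {ω : ℝ → ℝ} (hω : IsWeightFunction ω) {u v : ℝ} (huv : u ≤ v) :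
    ω (Real.exp u) ≤ ω (Real.exp v) :=
  hω.mono (Set.mem_Ici.mpr (Real.exp_pos u).le) (Set.mem_Ici.mpr (Real.exp_pos v).le)
    (Real.exp_le_exp.mpr huv)

/-- Boundedness of the family defining the Young conjugate. -/
lemma bdd {ω : ℝ → ℝ} (hω : IsWeightFunction ω) {y : ℝ} (hy : 0 ≤ y) :
    BddAbove (Set.range fun u : Set.Ici (0:ℝ) => y * (u : ℝ) - ω (Real.exp u)) := by
  obtain ⟨t₀, ht₀⟩ := hω.gamma (1/(y+1)) (by positivity)
  set u₁ := Real.log (max t₀ 1) with hu₁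
  have hu₁0 : 0 ≤ u₁ := Real.log_nonneg (le_max_right _ _)
  refine ⟨y * u₁, ?_⟩
  rintro x ⟨⟨u, hu⟩, rfl⟩
  simp only [Set.mem_Ici] at hu
  show y * u - ω (Real.exp u) ≤ y * u₁
  rcases le_or_gt u u₁ with h1 | h1
  · have h2 : 0 ≤ ω (Real.exp u) := hω.nonneg _
    nlinarith [mul_le_mul_of_nonneg_left h1 hy]
  · have hT : (0:ℝ) < max t₀ 1 := lt_of_lt_of_le one_pos (le_max_right _ _)
    have hexp : Real.exp u ≥ t₀ := by
      calc t₀ ≤ max t₀ 1 := le_max_left _ _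
      _ = Real.exp u₁ := (Real.exp_log hT).symm
      _ ≤ Real.exp u := Real.exp_le_exp.mpr h1.le
    have h3 := ht₀ _ hexp
    rw [Real.log_exp] at h3
    have hy1 : (0:ℝ) < y + 1 := by linarith
    have h4 : (y + 1) * u ≤ ω (Real.exp u) := by
      have h5 := mul_le_mul_of_nonneg_left h3 hy1.le
      have h6 : (y + 1) * (1/(y+1) * ω (Real.exp u)) = ω (Real.exp u) := by
        field_simp
      rw [h6] at h5
      exact h5
    nlinarith

/-- Young's inequality: lower bound on the Young conjugate. -/
lemma young_le {ω : ℝ → ℝ} (hω : IsWeightFunction ω) {y u : ℝ} (hy : 0 ≤ y) (hu : 0 ≤ u) :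
    y * u - ω (Real.exp u) ≤ youngConj (fun v => ω (Real.exp v)) y :=
  le_ciSup (bdd hω hy) (⟨u, hu⟩ : Set.Ici (0:ℝ))

lemma youngConj_le {φ : ℝ → ℝ} {y b : ℝ} (hb : ∀ u, 0 ≤ u → y * u - φ u ≤ b) :
    youngConj φ y ≤ b :=
  ciSup_le fun u => hb u u.2

end Stmt15Aux

set_option maxHeartbeats 1000000 in
open Stmt15Aux in
/-- Let `ω` be a weight function, `φ(t) = ω(eᵗ)` and `φ*` its Young conjugate.  For every
`h > 0` there exist `0 < h' < h` and `C > 0` such that for all `t > 0`,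
`(1/h) ω(t) ≤ sup_{k ∈ ℕ} (k log t − (1/h') φ*(k h')) + C`. -/
theorem stmt15 (ω : ℝ → ℝ) (hω : IsWeightFunction ω) (h : ℝ) (hh : 0 < h) :
    ∃ h' C : ℝ, 0 < h' ∧ h' < h ∧ 0 < C ∧ ∀ t > 0,
      (1 / h) * ω t ≤
        (⨆ k : ℕ, ((k : ℝ) * Real.log t -
          (1 / h') * youngConj (fun u => ω (Real.exp u)) ((k : ℝ) * h'))) + C := by
  obtain ⟨A₀, hA₀, t₀, hα⟩ := hω.alpha
  obtain ⟨A, hA⟩ : ∃ A : ℝ, A = A₀ ^ 2 + 1 := ⟨_, rfl⟩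
  have hA1 : (1:ℝ) ≤ A := by nlinarith
  have hApos : (0:ℝ) < A := by linarith
  obtain ⟨T, hT⟩ : ∃ T : ℝ, T = max t₀ 1 := ⟨_, rfl⟩
  have hT1 : (1:ℝ) ≤ T := hT ▸ le_max_right _ _
  have hTt₀ : t₀ ≤ T := hT ▸ le_max_left _ _
  -- doubling-type estimate
  have hαφ : ∀ s : ℝ, T ≤ Real.exp (s - 1) → ω (Real.exp s) ≤ A * ω (Real.exp (s - 1)) := by
    intro s hsT
    obtain ⟨x, hx⟩ : ∃ x : ℝ, x = Real.exp (s - 1) := ⟨_, rfl⟩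
    rw [← hx] at hsT ⊢
    have hxpos : (0:ℝ) < x := hx ▸ Real.exp_pos _
    have hx1 : (1:ℝ) ≤ x := le_trans hT1 hsT
    have hxt₀ : t₀ ≤ x := le_trans hTt₀ hsT
    have h2x : t₀ ≤ 2 * x := by linarith
    have hes : Real.exp s = Real.exp 1 * x := by
      rw [hx, ← Real.exp_add]
      congr 1
      ring
    have he : Real.exp 1 ≤ 4 := by
      have := Real.exp_one_lt_d9
      norm_num at this ⊢
      linarith
    have he4 : Real.exp s ≤ 4 * x := by
      rw [hes]
      nlinarith [mul_le_mul_of_nonneg_right he hxpos.le]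
    have h1 : ω (Real.exp s) ≤ ω (4 * x) :=
      hω.mono (Set.mem_Ici.mpr (Real.exp_pos s).le) (Set.mem_Ici.mpr (by linarith)) he4
    have h2 : ω (4 * x) ≤ A₀ * ω (2 * x) := by
      have h2' := hα (2 * x) h2x
      simp only at h2'
      calc ω (4 * x) = ω (2 * (2 * x)) := by congr 1; ring
      _ ≤ A₀ * ω (2 * x) := h2'
    have h3 : ω (2 * x) ≤ A₀ * ω x := hα x hxt₀
    have h4 : A₀ * ω (2 * x) ≤ A₀ * (A₀ * ω x) := mul_le_mul_of_nonneg_left h3 hA₀.le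
    have h5 : ω (Real.exp s) ≤ A₀ * (A₀ * ω x) := le_trans h1 (le_trans h2 h4)
    nlinarith [hω.nonneg x]
  obtain ⟨h', hh'⟩ : ∃ h'' : ℝ, h'' = h / (2 * A) := ⟨_, rfl⟩
  have hh'pos : 0 < h' := by rw [hh']; positivity
  have hne : h' ≠ 0 := ne_of_gt hh'pos
  have hh'lt : h' < h := by
    rw [hh', div_lt_iff₀ (by positivity)]
    nlinarith
  have hinv : 1 / h' = 2 * A / h := by
    rw [hh', one_div_div]
  obtain ⟨t₁, hγ⟩ := hω.gamma (1/h) (by positivity)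
  obtain ⟨s₃, hs₃⟩ : ∃ s₃ : ℝ, s₃ = max (1 + Real.log T) (max (Real.log (max t₁ 1)) 1) :=
    ⟨_, rfl⟩
  have hs₃1 : (1:ℝ) ≤ s₃ := hs₃ ▸ le_trans (le_max_right _ _) (le_max_right _ _)
  obtain ⟨C, hC⟩ : ∃ C : ℝ, C = (1/h) * ω (Real.exp s₃) + 1 := ⟨_, rfl⟩
  have hCpos : 0 < C := by
    have h0 : 0 ≤ (1/h) * ω (Real.exp s₃) := by
      have := hω.nonneg (Real.exp s₃)
      positivity
    rw [hC]; linarith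
  refine ⟨h', C, hh'pos, hh'lt, hCpos, ?_⟩
  intro t ht
  set φ : ℝ → ℝ := fun u => ω (Real.exp u) with hφ
  have hφe : ∀ v : ℝ, ω (Real.exp v) = φ v := fun v => rfl
  have hφ0 : φ 0 = 0 := by
    rw [← hφe 0]; simp only [Real.exp_zero]
    exact hω.eq_zero 1 ⟨zero_le_one, le_refl 1⟩
  clear_value φ
  set s : ℝ := Real.log t with hs
  have hexps : Real.exp s = t := by rw [hs]; exact Real.exp_log ht
  clear_value s
  have hφnn : ∀ u, 0 ≤ φ u := fun u => hφe u ▸ hω.nonneg (Real.exp u)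
  set F : ℕ → ℝ := fun k => (k : ℝ) * s - 1 / h' * youngConj φ ((k : ℝ) * h') with hF
  have hφstar0 : ∀ k : ℕ, 0 ≤ youngConj φ ((k : ℝ) * h') := by
    intro k
    have h1 := young_le hω (y := (k : ℝ) * h')
      (u := 0) (mul_nonneg (Nat.cast_nonneg k) hh'pos.le) le_rfl
    rw [mul_zero] at h1
    simp only [hφe, ← hφ] at h1
    rw [hφ0] at h1
    linarith
  have hbdd : BddAbove (Set.range F) := by
    rcases le_or_gt 1 t with ht1 | ht1
    · have hs0 : 0 ≤ s := by rw [← hexps] at ht1; exact (Real.one_le_exp_iff).mp ht1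
      refine ⟨1 / h' * φ s, ?_⟩
      rintro x ⟨k, rfl⟩
      have hy := young_le hω (y := (k : ℝ) * h')
        (u := s) (mul_nonneg (Nat.cast_nonneg k) hh'pos.le) hs0
      simp only [hφe, ← hφ] at hy
      have h1 : 1 / h' * ((k : ℝ) * h' * s - φ s) ≤ 1 / h' * youngConj φ ((k : ℝ) * h') :=
        mul_le_mul_of_nonneg_left hy (by positivity)
      have h2 : 1 / h' * ((k : ℝ) * h' * s - φ s) = (k : ℝ) * s - 1 / h' * φ s := by
        field_simp
      simp only [hF]
      rw [h2] at h1
      linarith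
    · refine ⟨0, ?_⟩
      rintro x ⟨k, rfl⟩
      have hlt : s ≤ 0 := by
        rw [hs]; exact Real.log_nonpos ht.le ht1.le
      have h1 : (k : ℝ) * s ≤ 0 :=
        mul_nonpos_of_nonneg_of_nonpos (Nat.cast_nonneg k) hlt
      have h2 : 0 ≤ 1 / h' * youngConj φ ((k : ℝ) * h') :=
        mul_nonneg (by positivity) (hφstar0 k)
      simp only [hF]
      linarith
  clear_value F
  rcases le_or_gt s₃ s with hbig | hsmall
  · -- main case: s large
    have hs1 : (1:ℝ) ≤ s := le_trans hs₃1 hbig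
    obtain ⟨y₀, hy₀⟩ : ∃ y₀ : ℝ, y₀ = φ s - φ (s - 1) := ⟨_, rfl⟩
    have hy₀nn : 0 ≤ y₀ := by
      have h1 : φ (s - 1) ≤ φ s := by
        simp only [← hφe]; exact phi_mono hω (by linarith)
      rw [hy₀]; linarith
    obtain ⟨k, hk⟩ : ∃ k : ℕ, k = ⌊y₀ / h'⌋₊ := ⟨_, rfl⟩
    have hk1 : (k : ℝ) * h' ≤ y₀ := by
      have h1 : (k : ℝ) ≤ y₀ / h' := by
        rw [hk]; exact Nat.floor_le (by positivity)
      have h2 := mul_le_mul_of_nonneg_right h1 hh'pos.le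
      rwa [div_mul_cancel₀ _ hne] at h2
    have hk2 : y₀ ≤ (k : ℝ) * h' + h' := by
      have h1 : y₀ / h' < (k : ℝ) + 1 := by
        rw [hk]; exact Nat.lt_floor_add_one _
      have h2 := mul_lt_mul_of_pos_right h1 hh'pos
      rw [div_mul_cancel₀ _ hne] at h2
      nlinarith
    have hsupp : ∀ u, 0 ≤ u → φ s + y₀ * (u - s) - y₀ ≤ φ u := by
      intro u hu
      rcases lt_trichotomy u (s - 1) with h1 | h1 | h1
      · have hsl := hω.delta.slope_mono_adjacent (x := u) (y := s - 1) (z := s)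
          (Set.mem_Ici.mpr hu) (Set.mem_Ici.mpr (by linarith)) h1 (by linarith)
        rw [div_le_div_iff₀ (by linarith) (by linarith : (0:ℝ) < s - (s - 1))] at hsl
        simp only [hφe] at hsl
        nlinarith [hsl, hy₀]
      · rw [h1]
        nlinarith [hy₀]
      · rcases lt_trichotomy u s with h2 | h2 | h2
        · have hmono : φ (s - 1) ≤ φ u := by
            simp only [← hφe]; exact phi_mono hω (by linarith)
          have h3 : y₀ * (u - s) ≤ 0 := mul_nonpos_of_nonneg_of_nonpos hy₀nn (by linarith)
          have h4 : φ s - y₀ = φ (s - 1) := by rw [hy₀]; ring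
          linarith
        · rw [h2]; nlinarith
        · have hsl := hω.delta.slope_mono_adjacent (x := s - 1) (y := s) (z := u)
            (Set.mem_Ici.mpr (by linarith)) (Set.mem_Ici.mpr (by linarith))
            (by linarith) h2
          rw [div_le_div_iff₀ (by linarith : (0:ℝ) < s - (s - 1)) (by linarith)] at hsl
          simp only [hφe] at hsl
          nlinarith [hsl, hy₀]
    have hφstar : youngConj φ ((k : ℝ) * h') ≤ y₀ * s + y₀ - φ s := by
      apply youngConj_le
      intro u hu
      have h1 := hsupp u hu
      have h2 : ((k : ℝ) * h' - y₀) * u ≤ 0 :=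
        mul_nonpos_of_nonpos_of_nonneg (by linarith) hu
      nlinarith
    have hFk : 1 / h' * φ (s - 1) - s ≤ F k := by
      have h3 : F k = 1 / h' * ((k : ℝ) * h' * s - youngConj φ ((k : ℝ) * h')) := by
        simp only [hF]
        field_simp
      have hFk' : φ (s - 1) - h' * s ≤ (k : ℝ) * h' * s - youngConj φ ((k : ℝ) * h') := by
        have hs0 : (0:ℝ) ≤ s := by linarith
        have h7 : φ (s - 1) = φ s - y₀ := by rw [hy₀]; ring
        nlinarith [mul_le_mul_of_nonneg_right (show y₀ - h' ≤ (k : ℝ) * h' by linarith) hs0]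
      calc 1 / h' * φ (s - 1) - s = 1 / h' * (φ (s - 1) - h' * s) := by
            field_simp
      _ ≤ 1 / h' * ((k : ℝ) * h' * s - youngConj φ ((k : ℝ) * h')) :=
            mul_le_mul_of_nonneg_left hFk' (by positivity)
      _ = F k := h3.symm
    have hdou : φ s ≤ A * φ (s - 1) := by
      simp only [← hφe]
      apply hαφ
      have h1 : 1 + Real.log T ≤ s := le_trans (hs₃ ▸ le_max_left _ _) hbig
      have hTpos : (0:ℝ) < T := lt_of_lt_of_le one_pos hT1
      calc T = Real.exp (Real.log T) := (Real.exp_log hTpos).symm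
      _ ≤ Real.exp (s - 1) := Real.exp_le_exp.mpr (by linarith)
    have hγs : s ≤ (1/h) * φ s := by
      have hst : t₁ ≤ Real.exp s := by
        have h1 : Real.log (max t₁ 1) ≤ s :=
          le_trans (hs₃ ▸ le_trans (le_max_left _ _) (le_max_right _ _)) hbig
        calc t₁ ≤ max t₁ 1 := le_max_left _ _
        _ = Real.exp (Real.log (max t₁ 1)) :=
            (Real.exp_log (lt_of_lt_of_le one_pos (le_max_right _ _))).symm
        _ ≤ Real.exp s := Real.exp_le_exp.mpr h1
      have h1 := hγ _ hst
      rw [Real.log_exp, hφe] at h1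
      exact h1
    have h2' : (1/h) * φ s + (1/h) * φ s ≤ 1 / h' * φ (s - 1) := by
      rw [hinv]
      have h1 := mul_le_mul_of_nonneg_left hdou (show (0:ℝ) ≤ 2/h by positivity)
      calc (1/h) * φ s + (1/h) * φ s = (2/h) * φ s := by ring
      _ ≤ (2/h) * (A * φ (s - 1)) := h1
      _ = 2 * A / h * φ (s - 1) := by ring
    have hkey : (1/h) * φ s ≤ F k := by linarith [hFk, h2', hγs]
    have hle : F k ≤ ⨆ j : ℕ, F j := le_ciSup hbdd k
    calc (1/h) * ω t = (1/h) * φ s := by rw [← hexps, hφe]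
    _ ≤ F k := hkey
    _ ≤ (⨆ j : ℕ, F j) + C := by linarith
  · -- small case
    have hlhs : (1/h) * ω t ≤ (1/h) * φ s₃ := by
      refine mul_le_mul_of_nonneg_left ?_ (by positivity)
      rw [← hφe]
      refine hω.mono (Set.mem_Ici.mpr ht.le) (Set.mem_Ici.mpr (Real.exp_pos s₃).le) ?_
      calc t = Real.exp s := hexps.symm
      _ ≤ Real.exp s₃ := Real.exp_le_exp.mpr hsmall.le
    have hF0 : 0 ≤ F 0 := by
      have h1 : youngConj φ (((0:ℕ) : ℝ) * h') ≤ 0 := by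
        apply youngConj_le
        intro u hu
        have := hφnn u
        simp only [Nat.cast_zero, zero_mul]
        linarith
      simp only [hF, Nat.cast_zero, zero_mul, zero_sub]
      simp only [Nat.cast_zero, zero_mul] at h1
      have h2 : 0 ≤ 1 / h' := by positivity
      nlinarith [h1]
    have hle : F 0 ≤ ⨆ j : ℕ, F j := le_ciSup hbdd 0
    have hsup0 : 0 ≤ ⨆ j : ℕ, F j := le_trans hF0 hle
    have hCφ : C = (1/h) * φ s₃ + 1 := by rw [hC, hφe]
    calc (1/h) * ω t ≤ (1/h) * φ s₃ := hlhs
    _ ≤ (⨆ j : ℕ, F j) + C := by rw [hCφ] at *; linarith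
end

section
/- Let ω be a weight function, φ(t) = ω(e^t), and φ* its Young conjugate. Then for any h > 0, any h'' > h and any λ ≥ 0, inf_{j ∈ ℕ} (1+λ)^{−j} exp( (1/h) φ*(2jh) ) ≤ C · exp( −(1/h'') ω(√(1+λ)) ) for some constant C depending only on ω, h and h''. -/
/-- Auxiliary: bound the Young conjugate by a uniform bound on the summands. -/
lemma youngConj_le_of_forall {φ : ℝ → ℝ} {t B : ℝ}
    (hB : ∀ u : ℝ, 0 ≤ u → t * u - φ u ≤ B) : youngConj φ t ≤ B := by
  haveI : Nonempty (Set.Ici (0 : ℝ)) := ⟨⟨0, Set.mem_Ici.2 le_rfl⟩⟩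
  exact ciSup_le fun u => hB u u.2

set_option maxHeartbeats 1000000 in
/-- Let `ω` be a weight function, `φ(t) = ω(eᵗ)` and `φ*` its Young conjugate.  For any
`h > 0` and `h'' > h` there is `C > 0` such that for all `λ ≥ 0`,
`inf_{j ∈ ℕ} (1+λ)^{−j} exp((1/h) φ*(2jh)) ≤ C exp(−(1/h'') ω(√(1+λ)))`. -/
theorem stmt16 (ω : ℝ → ℝ) (hω : IsWeightFunction ω) (h h'' : ℝ)
    (hh : 0 < h) (hh'' : h < h'') :
    ∃ C > 0, ∀ lam : ℝ, 0 ≤ lam →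
      (⨅ j : ℕ, (1 + lam) ^ (-(j : ℝ)) *
          Real.exp ((1 / h) * youngConj (fun u => ω (Real.exp u)) (2 * (j : ℝ) * h))) ≤
        C * Real.exp (-(1 / h'') * ω (Real.sqrt (1 + lam))) := by
  set φ : ℝ → ℝ := fun u => ω (Real.exp u) with hφdef
  have hφnonneg : ∀ u : ℝ, 0 ≤ φ u := fun u => hω.nonneg _
  have hmono : ∀ a b : ℝ, 0 ≤ a → a ≤ b → ω a ≤ ω b := fun a b ha hab =>
    hω.mono ha (ha.trans hab) hab
  have hh''pos : 0 < h'' := hh.trans hh''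
  have hinv : 1 / h'' < 1 / h := one_div_lt_one_div_of_lt hh hh''
  set ε : ℝ := 1 / h - 1 / h'' with hεdef
  have hεpos : 0 < ε := by simp only [hεdef]; linarith
  obtain ⟨C₁, hC₁, t₀, hα⟩ := hω.alpha
  obtain ⟨tγ, hγ⟩ := hω.gamma (ε / 4) (by positivity)
  set S₀ : ℝ := max 0 (max t₀ tγ) with hS₀def
  set δ : ℝ := min 1 (ε * h / (2 * C₁ ^ 2)) with hδdef
  have hδpos : 0 < δ := lt_min one_pos (by positivity)
  have hδ1 : δ ≤ 1 := min_le_left _ _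
  set M : ℝ := ω (Real.exp S₀) with hMdef
  have hM0 : 0 ≤ M := hω.nonneg _
  refine ⟨Real.exp (M / h''), Real.exp_pos _, ?_⟩
  intro lam hlam
  have h1lam : (1 : ℝ) ≤ 1 + lam := by linarith
  have hpos : (0 : ℝ) < 1 + lam := by linarith
  set s : ℝ := Real.log (Real.sqrt (1 + lam)) with hsdef
  have hsqrt1 : (1 : ℝ) ≤ Real.sqrt (1 + lam) := by
    have h1 := Real.sq_sqrt (by linarith : (0:ℝ) ≤ 1 + lam)
    have h2 := Real.sqrt_nonneg (1 + lam)
    nlinarith [h1, h2]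
  have hs0 : 0 ≤ s := Real.log_nonneg hsqrt1
  have hexps : Real.exp s = Real.sqrt (1 + lam) := Real.exp_log (by linarith)
  have hωs : ω (Real.sqrt (1 + lam)) = φ s := by rw [hφdef]; simp [hexps]
  have hlog : Real.log (1 + lam) = 2 * s := by
    rw [hsdef, Real.log_sqrt (by linarith : (0:ℝ) ≤ 1 + lam)]; ring
  have hbdd : BddBelow (Set.range fun j : ℕ => (1 + lam) ^ (-(j : ℝ)) *
      Real.exp ((1 / h) * youngConj φ (2 * (j : ℝ) * h))) := by
    refine ⟨0, ?_⟩
    rintro x ⟨j, rfl⟩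
    positivity
  by_cases hcase : s < S₀
  · -- small `s` : use `j = 0`
    have hyc0 : youngConj φ (2 * ((0 : ℕ) : ℝ) * h) ≤ 0 := by
      apply youngConj_le_of_forall
      intro u hu
      have h1 := hφnonneg u
      have h2 : 2 * ((0:ℕ):ℝ) * h * u = 0 := by simp
      linarith
    have hle1 : (⨅ j : ℕ, (1 + lam) ^ (-(j : ℝ)) *
        Real.exp ((1 / h) * youngConj φ (2 * (j : ℝ) * h))) ≤ 1 := by
      refine le_trans (ciInf_le hbdd 0) ?_
      have h1 : (1 + lam) ^ (-((0 : ℕ) : ℝ)) = 1 := by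
        simp
      rw [h1, one_mul]
      calc Real.exp ((1 / h) * youngConj φ (2 * ((0 : ℕ) : ℝ) * h))
          ≤ Real.exp 0 := by
            apply Real.exp_le_exp.2
            have hinvh : 0 ≤ 1 / h := by positivity
            linarith [mul_nonneg hinvh (neg_nonneg.2 hyc0)]
        _ = 1 := Real.exp_zero
    refine hle1.trans ?_
    have hωM : ω (Real.sqrt (1 + lam)) ≤ M := by
      rw [hωs, hMdef, hφdef]
      exact hmono _ _ (Real.exp_nonneg _) (Real.exp_le_exp.2 hcase.le)
    rw [← Real.exp_add]
    have : (0 : ℝ) ≤ M / h'' + -(1 / h'') * ω (Real.sqrt (1 + lam)) := by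
      have heq : M / h'' + -(1 / h'') * ω (Real.sqrt (1 + lam))
          = (M - ω (Real.sqrt (1 + lam))) / h'' := by ring
      rw [heq]
      exact div_nonneg (by linarith) hh''pos.le
    calc (1 : ℝ) = Real.exp 0 := Real.exp_zero.symm
      _ ≤ _ := Real.exp_le_exp.2 this
  · -- large `s`
    have hsS : S₀ ≤ s := not_lt.1 hcase
    have hst₀ : t₀ ≤ s := le_trans (le_trans (le_max_left _ _) (le_max_right _ _)) hsS
    have hstγ : tγ ≤ s := le_trans (le_trans (le_max_right _ _) (le_max_right _ _)) hsS
    have hexpes : s + 1 ≤ Real.exp s := Real.add_one_le_exp s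
    have ht₀e : t₀ ≤ Real.exp s := by linarith
    have htγe : tγ ≤ Real.exp s := by linarith
    have hφs0 : 0 ≤ φ s := hφnonneg s
    -- monotonicity of φ
    have hφmono : ∀ a b : ℝ, a ≤ b → φ a ≤ φ b := fun a b hab =>
      hmono _ _ (Real.exp_nonneg _) (Real.exp_le_exp.2 hab)
    have hφsδ : φ s ≤ φ (s + δ) := hφmono _ _ (by linarith)
    set t : ℝ := (φ (s + δ) - φ s) / δ with htdef
    have ht0 : 0 ≤ t := div_nonneg (by linarith) hδpos.le
    have htδ : t * δ = φ (s + δ) - φ s := div_mul_cancel₀ _ (ne_of_gt hδpos)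
    -- key pointwise bound: for all u ≥ 0, t*u - φ u ≤ t*(s+δ) - φ s
    have key : ∀ u : ℝ, 0 ≤ u → t * u - φ u ≤ t * (s + δ) - φ s := by
      intro u hu
      rcases lt_or_ge u s with hus | hsu
      · -- u < s : slope from u to s is ≤ t
        have hsl := hω.delta.slope_mono_adjacent (show u ∈ Set.Ici 0 from hu)
          (show s + δ ∈ Set.Ici 0 from by simp; linarith) hus (by linarith)
        have hden : s + δ - s = δ := by ring
        rw [hden] at hsl
        -- hsl : (φ s - φ u)/(s - u) ≤ (φ (s+δ) - φ s)/δ = t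
        have hsl' : (φ s - φ u) / (s - u) ≤ t := by rw [htdef]; exact hsl
        have h2 : φ s - φ u ≤ t * (s - u) := (div_le_iff₀ (by linarith)).1 hsl'
        have h3 : t * (s - u) = t * s - t * u := by ring
        have h4 : t * (s + δ) = t * s + t * δ := by ring
        have h5 : 0 ≤ t * δ := mul_nonneg ht0 hδpos.le
        linarith
      · rcases le_or_gt u (s + δ) with huδ | hδu
        · -- s ≤ u ≤ s + δ
          have h1 : φ s ≤ φ u := hφmono _ _ hsu
          have h2 : t * u ≤ t * (s + δ) := mul_le_mul_of_nonneg_left huδ ht0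
          linarith
        · -- u > s + δ : slope from s+δ to u is ≥ t
          have hsl := hω.delta.slope_mono_adjacent (show s ∈ Set.Ici 0 from hs0)
            (show u ∈ Set.Ici 0 from hu) (show s < s + δ by linarith) hδu
          have hden : s + δ - s = δ := by ring
          rw [hden] at hsl
          have hsl' : t ≤ (φ u - φ (s + δ)) / (u - (s + δ)) := by rw [htdef]; exact hsl
          have h2 : t * (u - (s + δ)) ≤ φ u - φ (s + δ) := by
            have := (le_div_iff₀ (by linarith : (0:ℝ) < u - (s + δ))).1 hsl'
            linarith
          have h3 : t * (u - (s + δ)) = t * u - t * (s + δ) := by ring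
          linarith
    -- bounds from α and γ
    have hα1 : ω (2 * Real.exp s) ≤ C₁ * ω (Real.exp s) := hα _ ht₀e
    have hα2 : ω (2 * (2 * Real.exp s)) ≤ C₁ * ω (2 * Real.exp s) := by
      apply hα
      have := Real.exp_pos s
      linarith
    have hφs1 : φ (s + 1) ≤ C₁ ^ 2 * φ s := by
      have he1 : Real.exp (s + 1) ≤ 2 * (2 * Real.exp s) := by
        rw [Real.exp_add]
        have h4 : Real.exp 1 ≤ 4 := by
          have := Real.exp_one_lt_d9
          linarith
        have h5 := mul_le_mul_of_nonneg_left h4 (Real.exp_pos s).le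
        have h6 : Real.exp s * 4 = 2 * (2 * Real.exp s) := by ring
        linarith
      have hm : φ (s + 1) ≤ ω (2 * (2 * Real.exp s)) :=
        hmono _ _ (Real.exp_nonneg _) he1
      calc φ (s + 1) ≤ ω (2 * (2 * Real.exp s)) := hm
        _ ≤ C₁ * ω (2 * Real.exp s) := hα2
        _ ≤ C₁ * (C₁ * ω (Real.exp s)) := mul_le_mul_of_nonneg_left hα1 hC₁.le
        _ = C₁ ^ 2 * φ s := by rw [hφdef]; ring
    -- convexity interpolation : φ(s+δ) - φ s ≤ δ * φ(s+1)
    have hinterp : φ (s + δ) - φ s ≤ δ * φ (s + 1) := by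
      have hcvx := hω.delta.2 (show s ∈ Set.Ici 0 from hs0)
        (show s + 1 ∈ Set.Ici 0 from by simp; linarith)
        (show (0:ℝ) ≤ 1 - δ by linarith) (show (0:ℝ) ≤ δ from hδpos.le)
        (show (1 - δ) + δ = 1 by ring)
      simp only [smul_eq_mul] at hcvx
      have harg : (1 - δ) * s + δ * (s + 1) = s + δ := by ring
      rw [harg] at hcvx
      -- hcvx : φ (s + δ) ≤ (1 - δ) * φ s + δ * φ (s + 1)
      have h1 := mul_nonneg hδpos.le (hφnonneg s)
      have h2 : (1 - δ) * φ s = φ s - δ * φ s := by ring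
      linarith
    have htδbound : t * δ ≤ (ε * h / 2) * φ s := by
      rw [htδ]
      have hδ2 : δ ≤ ε * h / (2 * C₁ ^ 2) := min_le_right _ _
      calc φ (s + δ) - φ s ≤ δ * φ (s + 1) := hinterp
        _ ≤ δ * (C₁ ^ 2 * φ s) := mul_le_mul_of_nonneg_left hφs1 hδpos.le
        _ ≤ (ε * h / (2 * C₁ ^ 2)) * (C₁ ^ 2 * φ s) := by
            apply mul_le_mul_of_nonneg_right hδ2 (by positivity)
        _ = (ε * h / 2) * φ s := by field_simp
    have hγs : 2 * s ≤ (ε / 2) * φ s := by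
      have := hγ (Real.exp s) htγe
      rw [Real.log_exp] at this
      rw [hφdef]
      linarith
    -- choose j
    set j : ℕ := ⌊t / (2 * h)⌋₊ with hjdef
    have hjt : 2 * (j : ℝ) * h ≤ t := by
      have h1 : (j : ℝ) ≤ t / (2 * h) := Nat.floor_le (by positivity)
      have h2 : (j : ℝ) * (2 * h) ≤ t := by
        rw [← le_div_iff₀ (by linarith : (0:ℝ) < 2 * h)]
        exact h1
      linarith
    have hjt2 : t - 2 * h ≤ 2 * (j : ℝ) * h := by
      have h1 : t / (2 * h) < (j : ℝ) + 1 := Nat.lt_floor_add_one _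
      have h2 : t < ((j : ℝ) + 1) * (2 * h) :=
        (div_lt_iff₀ (by linarith : (0:ℝ) < 2 * h)).1 h1
      have h3 : ((j : ℝ) + 1) * (2 * h) = 2 * (j : ℝ) * h + 2 * h := by ring
      linarith
    have hA : youngConj φ (2 * (j : ℝ) * h) ≤ t * (s + δ) - φ s := by
      apply youngConj_le_of_forall
      intro u hu
      have h1 : (2 * (j : ℝ) * h) * u ≤ t * u := mul_le_mul_of_nonneg_right hjt hu
      have h2 := key u hu
      linarith
    -- the exponent inequality
    have hexpineq : Real.log (1 + lam) * (-(j : ℝ)) + (1 / h) * youngConj φ (2 * (j : ℝ) * h)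
        ≤ -(1 / h'') * ω (Real.sqrt (1 + lam)) := by
      rw [hlog, hωs]
      have c1 : (1 / h) * youngConj φ (2 * (j : ℝ) * h) ≤ (1 / h) * (t * (s + δ) - φ s) :=
        mul_le_mul_of_nonneg_left hA (by positivity)
      have c2 : 2 * s * (-(j : ℝ)) ≤ (1 / h) * (-(t - 2 * h) * s) := by
        have h1 : (t - 2 * h) * s ≤ (2 * (j : ℝ) * h) * s :=
          mul_le_mul_of_nonneg_right hjt2 hs0
        have h2 : (1 / h) * ((2 * (j : ℝ) * h) * s) = -(2 * s * (-(j : ℝ))) := by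
          field_simp
        have h3 : (1 / h) * (-(t - 2 * h) * s) = -((1 / h) * ((t - 2 * h) * s)) := by ring
        have h4 : (1 / h) * ((t - 2 * h) * s) ≤ (1 / h) * ((2 * (j : ℝ) * h) * s) :=
          mul_le_mul_of_nonneg_left h1 (by positivity)
        rw [h3]
        rw [h2] at h4
        linarith
      have c3 : (1 / h) * (-(t - 2 * h) * s) + (1 / h) * (t * (s + δ) - φ s)
          = 2 * s + (1 / h) * (t * δ) - (1 / h) * φ s := by
        field_simp
        ring
      have c4 : (1 / h) * (t * δ) ≤ (ε / 2) * φ s := by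
        calc (1 / h) * (t * δ) ≤ (1 / h) * ((ε * h / 2) * φ s) :=
              mul_le_mul_of_nonneg_left htδbound (by positivity)
          _ = (ε / 2) * φ s := by field_simp
      have c5 : (1 / h) * (φ s) = (1 / h'') * (φ s) + ε * φ s := by
        rw [hεdef]; ring
      have c6 : ε * φ s = (ε / 2) * φ s + (ε / 2) * φ s := by ring
      linarith [c1, c2, c3, c4, hγs]
    -- assemble
    refine le_trans (ciInf_le hbdd j) ?_
    rw [Real.rpow_def_of_pos hpos, ← Real.exp_add]
    calc Real.exp (Real.log (1 + lam) * (-(j : ℝ)) +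
            (1 / h) * youngConj φ (2 * (j : ℝ) * h))
        ≤ Real.exp (-(1 / h'') * ω (Real.sqrt (1 + lam))) := Real.exp_le_exp.2 hexpineq
      _ ≤ Real.exp (M / h'') * Real.exp (-(1 / h'') * ω (Real.sqrt (1 + lam))) := by
          exact le_mul_of_one_le_left (Real.exp_pos _).le
            (Real.one_le_exp (by positivity : (0:ℝ) ≤ M / h''))
end
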